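/- arXiv:2302.01546 — 6 statements merged into one kernel-verified Lean document; each statement's English description precedes it below -/
import Mathlib

section
/- Let V be a finite set and f : 2^V → ℝ a nonnegative submodular function. Let S be a random subset of V (a finitely supported probability distribution over subsets of V) such that for every element e ∈ V, the probability that e ∈ S is at most p, where p ∈ [0,1]. Then E[f(S)] ≥ (1 − p)·f(∅). -/
/-!
Add the elements of `V` one at a time in order of decreasing marginal probability `x`,
building a chain `∅ = T₀ ⊂ T₁ ⊂ ⋯ ⊂ Tₙ = V`. By submodularity, adding `a` to `T` raises
`f (S ∩ T)` by at least `f (insert a T) - f T` whenever `a ∈ S`, hence raises `E[f (S ∩ T)]` by at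
least `x a * (f (insert a T) - f T)`. Since the marginals decrease and `f ≥ 0`, this propagates
`(1 - p) f ∅ + x a * f T ≤ E[f (S ∩ T)]`, where `a` is the last element added (a summation by
parts); at `T = V` drop the nonnegative term.
-/

namespace SetFunction

open Finset

variable {V : Type*} [DecidableEq V]

def IsSubmodular (f : Finset V → ℝ) : Prop :=
  ∀ X Y : Finset V, X ⊆ Y → ∀ e ∉ Y, f (insert e Y) - f Y ≤ f (insert e X) - f X

theorem IsSubmodular.ite_gain_le_inter_insert {f : Finset V → ℝ} (hf : IsSubmodular f)
    {a : V} {T : Finset V} (ha : a ∉ T) (S : Finset V) :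
    (if a ∈ S then f (insert a T) - f T else 0) ≤ f (S ∩ insert a T) - f (S ∩ T) := by
  by_cases haS : a ∈ S
  · rw [if_pos haS, inter_insert_of_mem haS]
    exact hf (S ∩ T) T inter_subset_right a ha
  · rw [if_neg haS, inter_insert_of_notMem haS, sub_self]

variable [Fintype V]

def marginal (μ : Finset V → ℝ) (e : V) : ℝ :=
  ∑ S ∈ univ.filter (fun S : Finset V => e ∈ S), μ S

theorem marginal_nonneg {μ : Finset V → ℝ} (hμ : ∀ S, 0 ≤ μ S) (e : V) : 0 ≤ marginal μ e :=
  sum_nonneg fun S _ => hμ S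

theorem sum_mul_ite_mem (μ : Finset V → ℝ) (e : V) (c : ℝ) :
    ∑ S : Finset V, μ S * (if e ∈ S then c else 0) = marginal μ e * c := by
  simp only [mul_ite, mul_zero, marginal, sum_mul, sum_filter, ite_mul, zero_mul]

theorem IsSubmodular.marginal_mul_gain_le {f : Finset V → ℝ} (hf : IsSubmodular f)
    {μ : Finset V → ℝ} (hμ : ∀ S, 0 ≤ μ S) {a : V} {T : Finset V} (ha : a ∉ T) :
    marginal μ a * (f (insert a T) - f T) ≤
      ∑ S, μ S * f (S ∩ insert a T) - ∑ S, μ S * f (S ∩ T) := by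
  rw [← sum_mul_ite_mem, ← sum_sub_distrib]
  gcongr with S
  rw [← mul_sub]
  exact mul_le_mul_of_nonneg_left (hf.ite_gain_le_inter_insert ha S) (hμ S)

theorem IsSubmodular.le_sum_mul_inter {f : Finset V → ℝ} (hf_nonneg : ∀ S, 0 ≤ f S)
    (hf : IsSubmodular f) {μ : Finset V → ℝ} (hμ_nonneg : ∀ S, 0 ≤ μ S)
    (hμ_sum : ∑ S, μ S = 1) {p : ℝ} (hmarg : ∀ e, marginal μ e ≤ p) (T : Finset V) :
    ∀ q ≤ p, (∀ e ∈ T, q ≤ marginal μ e) →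
      (1 - p) * f ∅ + q * f T ≤ ∑ S, μ S * f (S ∩ T) := by
  induction T using induction_on_min_value (marginal μ) with
  | empty =>
    intro q hqp _
    simp only [inter_empty, ← sum_mul, hμ_sum]
    nlinarith [hf_nonneg ∅]
  | insert a T ha hmin ih =>
    intro q hqp hq
    have hprev := ih (marginal μ a) (hmarg a) hmin
    have hgain := hf.marginal_mul_gain_le hμ_nonneg ha
    have hqa : q * f (insert a T) ≤ marginal μ a * f (insert a T) :=
      mul_le_mul_of_nonneg_right (hq a (mem_insert_self a T)) (hf_nonneg _)
    linarith

end SetFunction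

theorem stmt_0_general {V : Type*} [Fintype V] [DecidableEq V]
    (f : Finset V → ℝ)
    (hf_nonneg : ∀ S : Finset V, 0 ≤ f S)
    (hf_submod : ∀ X Y : Finset V, X ⊆ Y → ∀ e ∉ Y,
      f (insert e Y) - f Y ≤ f (insert e X) - f X)
    (μ : Finset V → ℝ)
    (hμ_nonneg : ∀ S : Finset V, 0 ≤ μ S)
    (hμ_sum : ∑ S : Finset V, μ S = 1)
    (p : ℝ) (hp0 : 0 ≤ p)
    (hmarg : ∀ e : V, ∑ S ∈ Finset.univ.filter (fun S : Finset V => e ∈ S), μ S ≤ p) :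
    (1 - p) * f ∅ ≤ ∑ S : Finset V, μ S * f S := by
  have h := SetFunction.IsSubmodular.le_sum_mul_inter hf_nonneg hf_submod hμ_nonneg hμ_sum hmarg
    Finset.univ 0 hp0 fun e _ => SetFunction.marginal_nonneg hμ_nonneg e
  simpa only [zero_mul, add_zero, Finset.inter_univ] using h

/-- If `f` is a nonnegative submodular function on subsets of a finite
set `V`, and `μ` is a (finitely supported) probability distribution over subsets of `V`
such that every element belongs to the random subset with probability at most `p ∈ [0,1]`,
then `E[f(S)] ≥ (1 - p) * f(∅)`. -/
theorem stmt_0 {V : Type*} [Fintype V] [DecidableEq V]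
    (f : Finset V → ℝ)
    (hf_nonneg : ∀ S : Finset V, 0 ≤ f S)
    (hf_submod : ∀ X Y : Finset V, X ⊆ Y → ∀ e ∉ Y,
      f (insert e Y) - f Y ≤ f (insert e X) - f X)
    (μ : Finset V → ℝ)
    (hμ_nonneg : ∀ S : Finset V, 0 ≤ μ S)
    (hμ_sum : ∑ S : Finset V, μ S = 1)
    (p : ℝ) (hp0 : 0 ≤ p) (hp1 : p ≤ 1)
    (hmarg : ∀ e : V, ∑ S ∈ Finset.univ.filter (fun S : Finset V => e ∈ S), μ S ≤ p) :
    (1 - p) * f ∅ ≤ ∑ S : Finset V, μ S * f S :=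
  stmt_0_general f hf_nonneg hf_submod μ hμ_nonneg hμ_sum p hp0 hmarg
end

section
/- Let V be a finite set, f : 2^V → ℝ a nonnegative submodular function, and A ⊆ V a fixed set. Let B be a random subset of V ∖ A such that every element e ∈ V ∖ A belongs to B with probability at most p, where p ∈ [0,1]. Then E[f(A ∪ B)] ≥ (1 − p)·f(A). -/
/-!
Remove from the ground set an element `e` of least inclusion probability `m`. Erasing `e` from
the random set loses, by submodularity, at least `m · (g W - g (W \ {e}))` in expectation,
while the marginals of the other elements are unchanged. Induction on `W` therefore yields the
stronger bound `(1 - p) g ∅ + q g W ≤ E[g(X)]` whenever `q ≤ P(e ∈ X) ≤ p` for all `e ∈ W`;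
taking `q = 0` and `g T = f (A ∪ T)` gives the theorem.
-/

open Finset

section

variable {V Ω : Type*} [DecidableEq V]

def IsSubmodular (g : Finset V → ℝ) : Prop :=
  ∀ X Y : Finset V, X ⊆ Y → ∀ e ∉ Y, g (insert e Y) - g Y ≤ g (insert e X) - g X

theorem IsSubmodular.comp_union_left {f : Finset V → ℝ} (hf : IsSubmodular f) (A : Finset V) :
    IsSubmodular fun T => f (A ∪ T) := by
  intro X Y hXY e heY
  simp only [union_insert]
  by_cases heA : e ∈ A
  · simp [heA]
  · exact hf _ _ (union_subset_union_right hXY) e (by simp [heA, heY])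

theorem IsSubmodular.sub_erase_le_of_subset {g : Finset V → ℝ} (hg : IsSubmodular g)
    {S W : Finset V} (hSW : S ⊆ W) {e : V} (he : e ∈ S) :
    g W - g (W.erase e) ≤ g S - g (S.erase e) := by
  have := hg (S.erase e) (W.erase e) (erase_subset_erase e hSW) e (notMem_erase e W)
  rwa [insert_erase (hSW he), insert_erase he] at this

variable [Fintype Ω]

/-- The probability that `e` lies in the random set `X` on the finite sample space `(Ω, μ)`. -/
def inclusionProb (μ : Ω → ℝ) (X : Ω → Finset V) (e : V) : ℝ :=
  ∑ ω ∈ univ.filter (fun ω => e ∈ X ω), μ ω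

theorem inclusionProb_erase_of_ne (μ : Ω → ℝ) (X : Ω → Finset V) {e e' : V} (h : e' ≠ e) :
    inclusionProb μ (fun ω => (X ω).erase e) e' = inclusionProb μ X e' := by
  simp only [inclusionProb, mem_erase, h, ne_eq, not_false_eq_true, true_and]

theorem IsSubmodular.sum_erase_add_mul_le_sum {g : Finset V → ℝ} (hg : IsSubmodular g)
    {μ : Ω → ℝ} (hμ : ∀ ω, 0 ≤ μ ω) {X : Ω → Finset V} {W : Finset V} (hXW : ∀ ω, X ω ⊆ W)
    (e : V) :
    ∑ ω, μ ω * g ((X ω).erase e) + inclusionProb μ X e * (g W - g (W.erase e)) ≤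
      ∑ ω, μ ω * g (X ω) := by
  rw [inclusionProb, sum_filter, sum_mul, ← sum_add_distrib]
  refine sum_le_sum fun ω _ => ?_
  split_ifs with he
  · nlinarith [mul_le_mul_of_nonneg_left (hg.sub_erase_le_of_subset (hXW ω) he) (hμ ω)]
  · simp [erase_eq_of_notMem he]

theorem IsSubmodular.one_sub_mul_add_mul_le_sum {g : Finset V → ℝ} (hg : IsSubmodular g)
    (hg_nonneg : ∀ S, 0 ≤ g S) {μ : Ω → ℝ} (hμ : ∀ ω, 0 ≤ μ ω) (hμ_sum : ∑ ω, μ ω = 1)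
    {W : Finset V} {X : Ω → Finset V} (hXW : ∀ ω, X ω ⊆ W) {p q : ℝ}
    (hle : ∀ e ∈ W, inclusionProb μ X e ≤ p) (hqp : q ≤ p)
    (hge : ∀ e ∈ W, q ≤ inclusionProb μ X e) :
    (1 - p) * g ∅ + q * g W ≤ ∑ ω, μ ω * g (X ω) := by
  induction W using Finset.strongInduction generalizing X q with
  | _ W ih =>
  rcases W.eq_empty_or_nonempty with rfl | hW
  · have hX : ∀ ω, X ω = ∅ := fun ω => subset_empty.mp (hXW ω)
    simp only [hX, ← sum_mul, hμ_sum]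
    nlinarith [hg_nonneg ∅]
  obtain ⟨e, heW, hmin⟩ := W.exists_min_image (inclusionProb μ X) hW
  set m := inclusionProb μ X e
  have hmarg : ∀ e' ∈ W.erase e, inclusionProb μ (fun ω => (X ω).erase e) e' =
      inclusionProb μ X e' := fun e' he' => inclusionProb_erase_of_ne μ X (ne_of_mem_erase he')
  have hind : (1 - p) * g ∅ + m * g (W.erase e) ≤ ∑ ω, μ ω * g ((X ω).erase e) :=
    ih _ (erase_ssubset heW) (fun ω => erase_subset_erase e (hXW ω))
      (fun e' he' => (hmarg e' he').symm ▸ hle e' (mem_of_mem_erase he')) (hle e heW)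
      (fun e' he' => (hmarg e' he').symm ▸ hmin e' (mem_of_mem_erase he'))
  have hstep := hg.sum_erase_add_mul_le_sum hμ hXW e
  nlinarith [mul_le_mul_of_nonneg_right (hge e heW) (hg_nonneg W)]

theorem IsSubmodular.one_sub_mul_le_sum {g : Finset V → ℝ} (hg : IsSubmodular g)
    (hg_nonneg : ∀ S, 0 ≤ g S) {μ : Ω → ℝ} (hμ : ∀ ω, 0 ≤ μ ω) (hμ_sum : ∑ ω, μ ω = 1)
    (X : Ω → Finset V) {p : ℝ} (hp : 0 ≤ p) (hle : ∀ e, inclusionProb μ X e ≤ p) :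
    (1 - p) * g ∅ ≤ ∑ ω, μ ω * g (X ω) := by
  have := hg.one_sub_mul_add_mul_le_sum hg_nonneg hμ hμ_sum
    (fun ω => subset_biUnion_of_mem X (mem_univ ω)) (fun e _ => hle e) hp
    (fun e _ => sum_nonneg fun ω _ => hμ ω)
  simpa using this

end

theorem stmt_1_general {V : Type*} [Fintype V] [DecidableEq V]
    (f : Finset V → ℝ)
    (hf_nonneg : ∀ S : Finset V, 0 ≤ f S)
    (hf_submod : ∀ X Y : Finset V, X ⊆ Y → ∀ e ∉ Y,
      f (insert e Y) - f Y ≤ f (insert e X) - f X)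
    (A : Finset V)
    (μ : Finset V → ℝ)
    (hμ_nonneg : ∀ S : Finset V, 0 ≤ μ S)
    (hμ_sum : ∑ S : Finset V, μ S = 1)
    (p : ℝ) (hp0 : 0 ≤ p)
    (hmarg : ∀ e ∈ Aᶜ, ∑ S ∈ Finset.univ.filter (fun S : Finset V => e ∈ S), μ S ≤ p) :
    (1 - p) * f A ≤ ∑ S : Finset V, μ S * f (A ∪ S) := by
  have hle : ∀ e, inclusionProb μ (· \ A) e ≤ p := by
    intro e
    by_cases heA : e ∈ A
    · simpa [inclusionProb, heA] using hp0
    · simpa [inclusionProb, heA] using hmarg e (mem_compl.mpr heA)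
  have := (IsSubmodular.comp_union_left hf_submod A).one_sub_mul_le_sum (fun T => hf_nonneg _)
    hμ_nonneg hμ_sum (· \ A) hp0 hle
  simpa only [union_sdiff_self_eq_union, union_empty] using this

/-- If `f` is a nonnegative submodular function on subsets of a finite
set `V`, `A ⊆ V` is a fixed set, and `μ` is a (finitely supported) probability
distribution over subsets of `V \ A` such that every element of `V \ A` belongs to the
random subset with probability at most `p ∈ [0,1]`, then `E[f(A ∪ B)] ≥ (1 - p) * f(A)`. -/
theorem stmt_1 {V : Type*} [Fintype V] [DecidableEq V]
    (f : Finset V → ℝ)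
    (hf_nonneg : ∀ S : Finset V, 0 ≤ f S)
    (hf_submod : ∀ X Y : Finset V, X ⊆ Y → ∀ e ∉ Y,
      f (insert e Y) - f Y ≤ f (insert e X) - f X)
    (A : Finset V)
    (μ : Finset V → ℝ)
    (hμ_nonneg : ∀ S : Finset V, 0 ≤ μ S)
    (hμ_sum : ∑ S : Finset V, μ S = 1)
    (hμ_supp : ∀ S : Finset V, μ S ≠ 0 → S ⊆ Aᶜ)
    (p : ℝ) (hp0 : 0 ≤ p) (hp1 : p ≤ 1)
    (hmarg : ∀ e ∈ Aᶜ, ∑ S ∈ Finset.univ.filter (fun S : Finset V => e ∈ S), μ S ≤ p) :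
    (1 - p) * f A ≤ ∑ S : Finset V, μ S * f (A ∪ S) :=
  stmt_1_general f hf_nonneg hf_submod A μ hμ_nonneg hμ_sum p hp0 hmarg
end

section
/- Let V be a finite set partitioned into m disjoint groups V_1, …, V_m, let f : 2^V → ℝ be nonnegative and submodular, let α, β be reals with 0 ≤ α ≤ 1/2 and α ≤ β ≤ 1, and let γ ∈ [0,1]. Suppose A ⊆ V satisfies |A ∩ V_i| ≤ ⌊β·|V_i|⌋ for every i ∈ [m] and f(A) ≥ γ·f(T) for every T ⊆ V satisfying |T ∩ V_i| ≤ ⌊β·|V_i|⌋ for every i. For each group i with |A ∩ V_i| < ⌊α·|V_i|⌋, let B_i be a uniform random subset of V_i ∖ A of size ⌊α·|V_i|⌋ − |A ∩ V_i|, sampled independently across groups, and B_i = ∅ otherwise. Then E[f(A ∪ (⋃_{i∈[m]} B_i))] ≥ (γ/2)·f(S) for every (α,β)-fair set S ⊆ V. -/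
/-!
Pair every choice of backup sets `B` with the choices `B'` that are disjoint from it group by
group. Since `α ≤ 1/2`, every `B` has the same positive number of partners, and the pairing is
symmetric. For a partner pair the sets `A ∪ B` and `A ∪ B'` meet exactly in `A`, so
submodularity and nonnegativity give `f A ≤ f (A ∪ B) + f (A ∪ B')`. Averaging over all pairs
gives `f A ≤ 2 E[f (A ∪ B)]`, and `γ f S ≤ f A` because a fair `S` meets the upper bounds.
-/

open Finset Function

section Submodular

variable {V : Type*} [DecidableEq V] {f : Finset V → ℝ}

theorem union_add_le_add_union_of_diminishing_returns
    (hf : ∀ X Y : Finset V, X ⊆ Y → ∀ e ∉ Y, f (insert e Y) - f Y ≤ f (insert e X) - f X)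
    {X Z : Finset V} (hZX : Z ⊆ X) {D : Finset V} (hDX : Disjoint D X) :
    f (X ∪ D) + f Z ≤ f X + f (Z ∪ D) := by
  induction D using Finset.induction_on generalizing X Z with
  | empty => simp
  | insert e D he ih =>
    have heX : e ∉ X := disjoint_left.mp hDX (mem_insert_self e D)
    have hstep := ih (insert_subset_insert e hZX)
      (disjoint_insert_right.mpr ⟨he, disjoint_of_subset_left (subset_insert e D) hDX⟩)
    have hmarg := hf Z X hZX e heX
    rw [insert_union, ← union_insert, insert_union, ← union_insert] at hstep
    linarith

theorem union_add_inter_le_of_diminishing_returns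
    (hf : ∀ X Y : Finset V, X ⊆ Y → ∀ e ∉ Y, f (insert e Y) - f Y ≤ f (insert e X) - f X)
    (X Y : Finset V) : f (X ∪ Y) + f (X ∩ Y) ≤ f X + f Y := by
  have h := union_add_le_add_union_of_diminishing_returns hf (inter_subset_right : Y ∩ X ⊆ X)
    (sdiff_disjoint : Disjoint (Y \ X) X)
  rwa [union_sdiff_self_eq_union, union_comm (Y ∩ X), sdiff_union_inter, inter_comm] at h

theorem le_union_add_union_of_disjoint (hf0 : ∀ S, 0 ≤ f S)
    (hf : ∀ X Y : Finset V, f (X ∪ Y) + f (X ∩ Y) ≤ f X + f Y)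
    (A : Finset V) {X Y : Finset V} (hXY : Disjoint X Y) : f A ≤ f (A ∪ X) + f (A ∪ Y) := by
  have h := hf (A ∪ X) (A ∪ Y)
  rw [← union_inter_distrib_left, disjoint_iff_inter_eq_empty.mp hXY, union_empty] at h
  linarith [hf0 (A ∪ X ∪ (A ∪ Y))]

end Submodular

theorem card_mul_le_two_mul_sum_of_regular {ι : Type*} (s : Finset ι) (r : ι → ι → Prop)
    [DecidableRel r] (hr : ∀ x y, r x y → r y x) {c : ℕ} (hc : 0 < c)
    (hdeg : ∀ x ∈ s, #{y ∈ s | r x y} = c) {g : ι → ℝ} {a : ℝ}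
    (hpair : ∀ x ∈ s, ∀ y ∈ s, r x y → a ≤ g x + g y) :
    #s * a ≤ 2 * ∑ x ∈ s, g x := by
  have hswap : ∑ x ∈ s, ∑ y ∈ s with r x y, g y = ∑ x ∈ s, ∑ y ∈ s with r x y, g x :=
    sum_comm' fun x y => by
      simp only [mem_filter]
      exact ⟨fun ⟨hx, hy, hxy⟩ => ⟨⟨hx, hr x y hxy⟩, hy⟩,
        fun ⟨⟨hx, hyx⟩, hy⟩ => ⟨hx, hy, hr y x hyx⟩⟩
  have hconst : ∀ h : ι → ℝ, ∑ x ∈ s, ∑ y ∈ s with r x y, h x = c * ∑ x ∈ s, h x := by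
    intro h
    rw [mul_sum]
    exact sum_congr rfl fun x hx => by rw [sum_const, hdeg x hx, nsmul_eq_mul]
  have hc' : (0 : ℝ) < c := Nat.cast_pos.mpr hc
  have key : c * (#s * a) ≤ c * (2 * ∑ x ∈ s, g x) :=
    calc c * (#s * a) = ∑ x ∈ s, ∑ y ∈ s with r x y, a := by
          rw [hconst fun _ => a, sum_const, nsmul_eq_mul]
      _ ≤ ∑ x ∈ s, ∑ y ∈ s with r x y, (g x + g y) :=
          sum_le_sum fun x hx => sum_le_sum fun y hy => hpair x hx y (mem_filter.mp hy).1
            (mem_filter.mp hy).2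
      _ = c * (2 * ∑ x ∈ s, g x) := by
          simp only [sum_add_distrib, hswap, hconst g]
          ring
  exact le_of_mul_le_mul_left key hc'

theorem disjoint_biUnion_of_pairwise_disjoint {ι V : Type*} [Fintype ι] [DecidableEq V]
    {W : ι → Finset V} (hW : Pairwise (Disjoint on W))
    {B B' : ι → Finset V} (hB : ∀ i, B i ⊆ W i) (hB' : ∀ i, B' i ⊆ W i)
    (h : ∀ i, Disjoint (B i) (B' i)) : Disjoint (univ.biUnion B) (univ.biUnion B') := by
  simp only [disjoint_biUnion_left, disjoint_biUnion_right, mem_univ, forall_const]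
  intro j i
  rcases eq_or_ne i j with rfl | hij
  · exact h i
  · exact (hW hij).mono (hB i) (hB' j)

section DisjointChoices

variable {ι V : Type*} [Fintype ι] [DecidableEq ι] [DecidableEq V] (W : ι → Finset V) (k : ι → ℕ)

theorem filter_disjoint_piFinset_powersetCard (B : ι → Finset V) :
    {B' ∈ Fintype.piFinset fun i => (W i).powersetCard (k i) | ∀ i, Disjoint (B i) (B' i)} =
      Fintype.piFinset fun i => (W i \ B i).powersetCard (k i) := by
  ext B'
  simp only [mem_filter, Fintype.mem_piFinset, mem_powersetCard, subset_sdiff]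
  constructor
  · rintro ⟨hB', hdisj⟩ i
    exact ⟨⟨(hB' i).1, (hdisj i).symm⟩, (hB' i).2⟩
  · intro hB'
    exact ⟨fun i => ⟨(hB' i).1.1, (hB' i).2⟩, fun i => (hB' i).1.2.symm⟩

theorem card_filter_disjoint_piFinset_powersetCard {B : ι → Finset V}
    (hB : B ∈ Fintype.piFinset fun i => (W i).powersetCard (k i)) :
    #{B' ∈ Fintype.piFinset fun i => (W i).powersetCard (k i) | ∀ i, Disjoint (B i) (B' i)} =
      ∏ i, (#(W i) - k i).choose (k i) := by
  rw [filter_disjoint_piFinset_powersetCard, Fintype.card_piFinset]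
  refine prod_congr rfl fun i _ => ?_
  obtain ⟨hBW, hBk⟩ := mem_powersetCard.mp (Fintype.mem_piFinset.mp hB i)
  rw [card_powersetCard, card_sdiff_of_subset hBW, hBk]

theorem card_mul_le_two_mul_sum_union_biUnion (hW : Pairwise (Disjoint on W))
    (hk : ∀ i, 2 * k i ≤ #(W i)) {f : Finset V → ℝ} (hf0 : ∀ S, 0 ≤ f S)
    (hf : ∀ X Y : Finset V, f (X ∪ Y) + f (X ∩ Y) ≤ f X + f Y) (A : Finset V) :
    #(Fintype.piFinset fun i => (W i).powersetCard (k i)) * f A ≤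
      2 * ∑ B ∈ Fintype.piFinset (fun i => (W i).powersetCard (k i)), f (A ∪ univ.biUnion B) := by
  have hsub : ∀ B ∈ Fintype.piFinset (fun i => (W i).powersetCard (k i)), ∀ i, B i ⊆ W i :=
    fun B hB i => (mem_powersetCard.mp (Fintype.mem_piFinset.mp hB i)).1
  refine card_mul_le_two_mul_sum_of_regular _ (fun B B' => ∀ i, Disjoint (B i) (B' i))
    (fun B B' h i => (h i).symm) (c := ∏ i, (#(W i) - k i).choose (k i))
    (prod_pos fun i _ => Nat.choose_pos (by have := hk i; omega))
    (fun B hB => card_filter_disjoint_piFinset_powersetCard W k hB) ?_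
  intro B hB B' hB' hBB'
  exact le_union_add_union_of_disjoint hf0 hf A
    (disjoint_biUnion_of_pairwise_disjoint hW (hsub B hB) (hsub B' hB') hBB')

end DisjointChoices

theorem two_mul_floor_mul_le {α : ℝ} (hα : α ≤ 1 / 2) (n : ℕ) : 2 * ⌊α * n⌋₊ ≤ n := by
  have hle : ⌊α * n⌋₊ ≤ ⌊(n : ℝ) / (2 : ℕ)⌋₊ :=
    Nat.floor_le_floor (by push_cast; nlinarith [(Nat.cast_nonneg n : (0 : ℝ) ≤ n)])
  rw [Nat.floor_div_eq_div] at hle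
  omega

theorem stmt_7_general {V : Type*} [Fintype V] [DecidableEq V]
    (m : ℕ) (Vg : Fin m → Finset V)
    (hdisj : ∀ i j : Fin m, i ≠ j → Disjoint (Vg i) (Vg j))
    (f : Finset V → ℝ)
    (hf_nonneg : ∀ S : Finset V, 0 ≤ f S)
    (hf_submod : ∀ X Y : Finset V, X ⊆ Y → ∀ e ∉ Y,
      f (insert e Y) - f Y ≤ f (insert e X) - f X)
    (α β γ : ℝ) (hα : α ≤ 1 / 2)
    (A : Finset V)
    (hApx : ∀ T : Finset V,
      (∀ i : Fin m, (T ∩ Vg i).card ≤ ⌊β * ((Vg i).card : ℝ)⌋₊) → γ * f T ≤ f A)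
    (k : Fin m → ℕ)
    (hk : ∀ i : Fin m, k i = ⌊α * ((Vg i).card : ℝ)⌋₊ - (A ∩ Vg i).card)
    (𝒞 : Finset (Fin m → Finset V))
    (h𝒞 : 𝒞 = Fintype.piFinset fun i => (Vg i \ A).powersetCard (k i)) :
    ∀ S : Finset V,
      (∀ i : Fin m, ⌊α * ((Vg i).card : ℝ)⌋₊ ≤ (S ∩ Vg i).card ∧
        (S ∩ Vg i).card ≤ ⌊β * ((Vg i).card : ℝ)⌋₊) →
      (γ / 2) * f S ≤
        (∑ B ∈ 𝒞, f (A ∪ Finset.univ.biUnion fun i => B i)) / (𝒞.card : ℝ) := by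
  intro S hS
  have hW : Pairwise (Disjoint on fun i => Vg i \ A) :=
    fun i j hij => (hdisj i j hij).mono sdiff_subset sdiff_subset
  have hk2 : ∀ i, 2 * k i ≤ #(Vg i \ A) := fun i => by
    have := two_mul_floor_mul_le hα #(Vg i)
    have := card_le_card (inter_subset_right : A ∩ Vg i ⊆ Vg i)
    rw [hk i, card_sdiff]
    omega
  have hcard : 0 < #𝒞 := by
    rw [h𝒞, Fintype.card_piFinset]
    exact prod_pos fun i _ => by
      rw [card_powersetCard]
      exact Nat.choose_pos (by have := hk2 i; omega)
  have hmain := card_mul_le_two_mul_sum_union_biUnion _ _ hW hk2 hf_nonneg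
    (union_add_inter_le_of_diminishing_returns hf_submod) A
  rw [← h𝒞] at hmain
  have hfA : γ * f S * #𝒞 ≤ f A * #𝒞 :=
    mul_le_mul_of_nonneg_right (hApx S fun i => (hS i).2) (Nat.cast_nonneg _)
  rw [le_div_iff₀ (Nat.cast_pos.mpr hcard)]
  linarith

/-- Suppose `A` satisfies the upper-bound constraints and is a
`γ`-approximation among all sets satisfying them.  Augmenting `A` with independent
uniform random backup sets `B i ⊆ V i \ A` of size `⌊α |V i|⌋ - |A ∩ V i|` (natural
subtraction; `B i = ∅` when the lower bound already holds) yields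
`E[f(A ∪ ⋃ i, B i)] ≥ (γ/2) * f S` for every `(α,β)`-fair set `S`, when `α ≤ 1/2`. -/
theorem stmt_7 {V : Type*} [Fintype V] [DecidableEq V]
    (m : ℕ) (Vg : Fin m → Finset V)
    (hdisj : ∀ i j : Fin m, i ≠ j → Disjoint (Vg i) (Vg j))
    (hcover : Finset.univ.biUnion Vg = (Finset.univ : Finset V))
    (f : Finset V → ℝ)
    (hf_nonneg : ∀ S : Finset V, 0 ≤ f S)
    (hf_submod : ∀ X Y : Finset V, X ⊆ Y → ∀ e ∉ Y,
      f (insert e Y) - f Y ≤ f (insert e X) - f X)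
    (α β γ : ℝ) (hα0 : 0 ≤ α) (hα : α ≤ 1 / 2) (hαβ : α ≤ β) (hβ1 : β ≤ 1)
    (hγ0 : 0 ≤ γ) (hγ1 : γ ≤ 1)
    (A : Finset V)
    (hA : ∀ i : Fin m, (A ∩ Vg i).card ≤ ⌊β * ((Vg i).card : ℝ)⌋₊)
    (hApx : ∀ T : Finset V,
      (∀ i : Fin m, (T ∩ Vg i).card ≤ ⌊β * ((Vg i).card : ℝ)⌋₊) → γ * f T ≤ f A)
    (k : Fin m → ℕ)
    (hk : ∀ i : Fin m, k i = ⌊α * ((Vg i).card : ℝ)⌋₊ - (A ∩ Vg i).card)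
    (𝒞 : Finset (Fin m → Finset V))
    (h𝒞 : 𝒞 = Fintype.piFinset fun i => (Vg i \ A).powersetCard (k i)) :
    ∀ S : Finset V,
      (∀ i : Fin m, ⌊α * ((Vg i).card : ℝ)⌋₊ ≤ (S ∩ Vg i).card ∧
        (S ∩ Vg i).card ≤ ⌊β * ((Vg i).card : ℝ)⌋₊) →
      (γ / 2) * f S ≤
        (∑ B ∈ 𝒞, f (A ∪ Finset.univ.biUnion fun i => B i)) / (𝒞.card : ℝ) :=
  stmt_7_general m Vg hdisj f hf_nonneg hf_submod α β γ hα A hApx k hk 𝒞 h𝒞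
end

section
/- Let V be a finite set partitioned into m disjoint groups V_1, …, V_m with |V_i| ≥ 2 for all i, let f : 2^V → ℝ be nonnegative and submodular, let α, β be reals with 1/2 < α ≤ β ≤ 1, let γ ∈ [0,1], and define g(S) := f(V ∖ S). Suppose A ⊆ V satisfies |A ∩ V_i| ≤ |V_i| − ⌊α·|V_i|⌋ for every i and g(A) ≥ γ·g(T) for every T ⊆ V satisfying |T ∩ V_i| ≤ |V_i| − ⌊α·|V_i|⌋ for every i. For each group i with |A ∩ V_i| < |V_i| − ⌊β·|V_i|⌋, let B_i be a uniform random subset of V_i ∖ A of size |V_i| − ⌊β·|V_i|⌋ − |A ∩ V_i|, sampled independently across groups, and B_i = ∅ otherwise. Then E[f(V ∖ (A ∪ (⋃_{i∈[m]} B_i)))] ≥ (γ/3)·f(S) for every (α,β)-fair set S ⊆ V. -/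
section Helpers

open Finset

variable {V : Type*} [DecidableEq V]

/-- Chain sum. -/
noncomputable def chainSum (h : Finset V → ℝ) (x : V → ℝ) : List V → Finset V → ℝ
  | [], _ => 0
  | a :: l, P => x a * (h (insert a P) - h P) + chainSum h x l (insert a P)

lemma chainSum_append (h : Finset V → ℝ) (x : V → ℝ) (a : V) :
    ∀ (l : List V) (P : Finset V),
      chainSum h x (l ++ [a]) P =
        chainSum h x l P + x a * (h (insert a (P ∪ l.toFinset)) - h (P ∪ l.toFinset))
  | [], P => by simp [chainSum]
  | b :: l, P => by
    have key := chainSum_append h x a l (insert b P)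
    have : insert b P ∪ l.toFinset = P ∪ (b :: l).toFinset := by
      simp [Finset.insert_union, List.toFinset_cons, Finset.union_insert]
    rw [this] at key
    simp only [List.cons_append, chainSum, List.append_eq]
    rw [key]
    ring

lemma chainSum_cons_ge (h : Finset V → ℝ) (x : V → ℝ) (hh : ∀ S, 0 ≤ h S) :
    ∀ (l : List V) (a : V) (P : Finset V), (∀ u ∈ a :: l, 0 ≤ x u) →
      List.Chain' (fun u v => x v ≤ x u) (a :: l) →
      -(x a * h P) ≤ chainSum h x (a :: l) P
  | [], a, P, hx0, _ => by
    simp only [chainSum]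
    have h1 : 0 ≤ x a * h (insert a P) := mul_nonneg (hx0 a (by simp)) (hh _)
    nlinarith [hh P]
  | b :: l, a, P, hx0, hch => by
    rw [List.Chain', List.isChain_cons_cons] at hch
    have ih := chainSum_cons_ge h x hh l b (insert a P)
      (fun u hu => hx0 u (List.mem_cons_of_mem a hu)) hch.2
    simp only [chainSum] at ih ⊢
    have h1 : 0 ≤ x a * h (insert a P) := mul_nonneg (hx0 a (by simp)) (hh _)
    have h2 : 0 ≤ h (insert a P) := hh _
    nlinarith [hh P, hch.1]

lemma chainSum_ge (h : Finset V → ℝ) (x : V → ℝ) (hh : ∀ S, 0 ≤ h S)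
    (l : List V) (p : ℝ) (hp : 0 ≤ p) (hx : ∀ u ∈ l, 0 ≤ x u ∧ x u ≤ p)
    (hch : List.Chain' (fun u v => x v ≤ x u) l) (P : Finset V) :
    -(p * h P) ≤ chainSum h x l P := by
  cases l with
  | nil => simp only [chainSum]; nlinarith [hh P]
  | cons a l =>
    have := chainSum_cons_ge h x hh l a P (fun u hu => (hx u hu).1) hch
    have hxa := hx a (by simp)
    nlinarith [hh P]

lemma sum_ge_chain {ι : Type*} (h : Finset V → ℝ)
    (hsub : ∀ X Y : Finset V, X ⊆ Y → ∀ e ∉ Y,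
      h (insert e Y) - h Y ≤ h (insert e X) - h X)
    (𝒟 : Finset ι) (x : V → ℝ) :
    ∀ (l : List V), l.Nodup → ∀ (R : ι → Finset V),
      (∀ B ∈ 𝒟, R B ⊆ l.toFinset) →
      (∀ u ∈ l, ((𝒟.filter fun B => u ∈ R B).card : ℝ) = x u) →
      (𝒟.card : ℝ) * h ∅ + chainSum h x l ∅ ≤ ∑ B ∈ 𝒟, h (R B) := by
  intro l
  induction l using List.reverseRecOn with
  | nil =>
    intro _ R hR _
    have : ∀ B ∈ 𝒟, h (R B) = h ∅ := by
      intro B hB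
      have : R B = ∅ := Finset.subset_empty.mp (by simpa using hR B hB)
      rw [this]
    rw [Finset.sum_congr rfl this, Finset.sum_const, nsmul_eq_mul]
    simp [chainSum]
  | append_singleton l a ih =>
    intro hnd R hR hx
    have hnd' : l.Nodup := (List.nodup_append'.mp hnd).1
    have hal : a ∉ l := by
      have := (List.nodup_append'.mp hnd).2.2
      intro hmem
      exact this hmem (List.mem_singleton_self a)
    -- new sets
    set R' : ι → Finset V := fun B => (R B).erase a with hR'
    have hR'sub : ∀ B ∈ 𝒟, R' B ⊆ l.toFinset := by
      intro B hB u hu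
      have hu' : u ∈ R B := Finset.mem_of_mem_erase hu
      have hune : u ≠ a := Finset.ne_of_mem_erase hu
      have := hR B hB hu'
      simp only [List.toFinset_append, List.toFinset_cons, List.toFinset_nil,
        Finset.mem_union, Finset.mem_insert, Finset.mem_singleton] at this
      rcases this with h1 | h1
      · exact h1
      · rcases h1 with h1 | h1
        · exact absurd h1 hune
        · simp at h1
    have hx' : ∀ u ∈ l, ((𝒟.filter fun B => u ∈ R' B).card : ℝ) = x u := by
      intro u hu
      have hune : u ≠ a := fun h => hal (h ▸ hu)
      have : (𝒟.filter fun B => u ∈ R' B) = (𝒟.filter fun B => u ∈ R B) := by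
        apply Finset.filter_congr
        intro B _
        simp [hR', Finset.mem_erase, hune]
      rw [this]
      exact hx u (List.mem_append_left _ hu)
    have IH := ih hnd' R' hR'sub hx'
    -- pointwise gain
    have hstep : ∀ B ∈ 𝒟,
        (if a ∈ R B then h (insert a l.toFinset) - h l.toFinset else 0)
          ≤ h (R B) - h (R' B) := by
      intro B hB
      by_cases hmem : a ∈ R B
      · simp only [hmem, if_true]
        have hXY : R' B ⊆ l.toFinset := hR'sub B hB
        have haY : a ∉ l.toFinset := by simpa using hal
        have := hsub (R' B) l.toFinset hXY a haY
        have hins : insert a (R' B) = R B := Finset.insert_erase hmem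
        rw [hins] at this
        linarith
      · simp only [hmem, if_false]
        have : R' B = R B := Finset.erase_eq_of_notMem hmem
        rw [this]
        simp
    have hsum : ((𝒟.filter fun B => a ∈ R B).card : ℝ)
          * (h (insert a l.toFinset) - h l.toFinset)
        ≤ ∑ B ∈ 𝒟, (h (R B) - h (R' B)) := by
      have h1 := Finset.sum_le_sum hstep
      have h2 : ∑ B ∈ 𝒟, (if a ∈ R B then h (insert a l.toFinset) - h l.toFinset else 0)
          = ((𝒟.filter fun B => a ∈ R B).card : ℝ)
            * (h (insert a l.toFinset) - h l.toFinset) := by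
        rw [← Finset.sum_filter, Finset.sum_const, nsmul_eq_mul]
      linarith
    have hsplit : ∑ B ∈ 𝒟, (h (R B) - h (R' B))
        = (∑ B ∈ 𝒟, h (R B)) - ∑ B ∈ 𝒟, h (R' B) := Finset.sum_sub_distrib _ _
    have hxa : ((𝒟.filter fun B => a ∈ R B).card : ℝ) = x a :=
      hx a (by simp)
    have hcs := chainSum_append h x a l (∅ : Finset V)
    rw [Finset.empty_union] at hcs
    rw [hcs]
    rw [hxa, hsplit] at hsum
    linarith

lemma avg_bound {ι : Type*} (h : Finset V → ℝ) (hh : ∀ S, 0 ≤ h S)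
    (hsub : ∀ X Y : Finset V, X ⊆ Y → ∀ e ∉ Y,
      h (insert e Y) - h Y ≤ h (insert e X) - h X)
    (𝒟 : Finset ι) (R : ι → Finset V) (W : Finset V)
    (hRW : ∀ B ∈ 𝒟, R B ⊆ W) (p : ℝ) (hp : 0 ≤ p)
    (hcnt : ∀ u ∈ W, ((𝒟.filter fun B => u ∈ R B).card : ℝ) ≤ p * 𝒟.card) :
    (1 - p) * (𝒟.card : ℝ) * h ∅ ≤ ∑ B ∈ 𝒟, h (R B) := by
  classical
  set cnt : V → ℕ := fun u => (𝒟.filter fun B => u ∈ R B).card with hcntdef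
  set le : V → V → Bool := fun u v => decide (cnt v ≤ cnt u) with hle
  set l : List V := W.toList.mergeSort le with hl
  have hperm : List.Perm l W.toList := List.mergeSort_perm _ _
  have hnd : l.Nodup := hperm.nodup_iff.mpr W.nodup_toList
  have hltf : l.toFinset = W := by
    ext u
    rw [List.mem_toFinset, hperm.mem_iff, Finset.mem_toList]
  have hsorted : l.Pairwise (fun u v => le u v = true) :=
    List.pairwise_mergeSort
      (fun a b c h1 h2 => by
        simp only [hle, decide_eq_true_eq] at *; omega)
      (fun a b => by simp only [hle]; by_cases hab : cnt b ≤ cnt a <;> simp [hab] <;> omega)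
      W.toList
  have hchain : List.Chain' (fun u v => ((cnt v : ℝ)) ≤ (cnt u : ℝ)) l := by
    apply List.Pairwise.isChain
    refine hsorted.imp ?_
    intro a b hab
    simp only [hle, decide_eq_true_eq] at hab
    exact_mod_cast hab
  have hx : ∀ u ∈ l, ((𝒟.filter fun B => u ∈ R B).card : ℝ) = ((cnt u : ℕ) : ℝ) := by
    intro u _; rfl
  have M1 := sum_ge_chain h hsub 𝒟 (fun u => ((cnt u : ℕ) : ℝ)) l hnd R
    (fun B hB => by rw [hltf]; exact hRW B hB) hx
  have M2 := chainSum_ge h (fun u => ((cnt u : ℕ) : ℝ)) hh l (p * 𝒟.card)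
    (by positivity)
    (fun u hu => ⟨by positivity, by
      have := hcnt u (by rw [← hltf]; exact List.mem_toFinset.mpr hu)
      exact this⟩)
    hchain ∅
  nlinarith [hh (∅ : Finset V)]

lemma count_mem_powersetCard (P : Finset V) (u : V) (hu : u ∈ P) (kk : ℕ)
    (h3k : 3 * kk ≤ 2 * P.card) :
    3 * ((P.powersetCard kk).filter fun s => u ∈ s).card
      ≤ 2 * (P.powersetCard kk).card := by
  rcases Nat.eq_zero_or_pos kk with hk0 | hkpos
  · subst hk0
    have : ((P.powersetCard 0).filter fun s => u ∈ s) = ∅ := by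
      apply Finset.filter_eq_empty_iff.mpr
      intro s hs
      rw [Finset.mem_powersetCard] at hs
      rw [Finset.card_eq_zero.mp hs.2]
      simp
    rw [this]
    simp
  · obtain ⟨k', rfl⟩ : ∃ k', kk = k' + 1 := ⟨kk - 1, by omega⟩
    have hbij : ((P.powersetCard (k' + 1)).filter fun s => u ∈ s).card
        = ((P.erase u).powersetCard k').card := by
      refine Finset.card_bij' (fun s _ => s.erase u) (fun s _ => insert u s)
        ?hi ?hj ?li ?ri
      case hi =>
        intro s hs
        rw [Finset.mem_filter, Finset.mem_powersetCard] at hs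
        rw [Finset.mem_powersetCard]
        constructor
        · intro v hv
          exact Finset.mem_erase.mpr ⟨Finset.ne_of_mem_erase hv,
            hs.1.1 (Finset.mem_of_mem_erase hv)⟩
        · rw [Finset.card_erase_of_mem hs.2, hs.1.2]
          omega
      case hj =>
        intro s hs
        rw [Finset.mem_powersetCard] at hs
        rw [Finset.mem_filter, Finset.mem_powersetCard]
        have hu' : u ∉ s := fun hmem => (Finset.mem_erase.mp (hs.1 hmem)).1 rfl
        refine ⟨⟨?_, ?_⟩, Finset.mem_insert_self u s⟩
        · intro v hv
          rcases Finset.mem_insert.mp hv with rfl | hv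
          · exact hu
          · exact Finset.mem_of_mem_erase (hs.1 hv)
        · rw [Finset.card_insert_of_notMem hu', hs.2]
      case li =>
        intro s hs
        rw [Finset.mem_filter] at hs
        exact Finset.insert_erase hs.2
      case ri =>
        intro s hs
        rw [Finset.mem_powersetCard] at hs
        have hu' : u ∉ s := fun hmem => (Finset.mem_erase.mp (hs.1 hmem)).1 rfl
        exact Finset.erase_insert hu'
    rw [hbij, Finset.card_powersetCard, Finset.card_powersetCard,
      Finset.card_erase_of_mem hu]
    have hw : 1 ≤ P.card := Finset.card_pos.mpr ⟨u, hu⟩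
    have hid : P.card * (P.card - 1).choose k' = P.card.choose (k' + 1) * (k' + 1) := by
      have := Nat.add_one_mul_choose_eq (P.card - 1) k'
      rwa [Nat.sub_add_cancel hw] at this
    have key : P.card * (3 * (P.card - 1).choose k')
        ≤ P.card * (2 * P.card.choose (k' + 1)) := by
      calc P.card * (3 * (P.card - 1).choose k')
          = 3 * (P.card * (P.card - 1).choose k') := by ring
        _ = 3 * (P.card.choose (k' + 1) * (k' + 1)) := by rw [hid]
        _ = (3 * (k' + 1)) * P.card.choose (k' + 1) := by ring
        _ ≤ (2 * P.card) * P.card.choose (k' + 1) := by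
            exact Nat.mul_le_mul_right _ h3k
        _ = P.card * (2 * P.card.choose (k' + 1)) := by ring
    exact Nat.le_of_mul_le_mul_left key (by omega)

lemma compl_submod (f : Finset V → ℝ) [Fintype V]
    (hf_submod : ∀ X Y : Finset V, X ⊆ Y → ∀ e ∉ Y,
      f (insert e Y) - f Y ≤ f (insert e X) - f X)
    (A : Finset V) :
    ∀ X Y : Finset V, X ⊆ Y → ∀ e ∉ Y,
      f ((A ∪ insert e Y)ᶜ) - f ((A ∪ Y)ᶜ) ≤ f ((A ∪ insert e X)ᶜ) - f ((A ∪ X)ᶜ) := by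
  intro X Y hXY e heY
  by_cases heA : e ∈ A
  · have hins : ∀ T : Finset V, A ∪ insert e T = A ∪ T := by
      intro T
      ext v
      simp only [Finset.mem_union, Finset.mem_insert]
      constructor
      · rintro (hv | rfl | hv)
        · exact Or.inl hv
        · exact Or.inl heA
        · exact Or.inr hv
      · rintro (hv | hv)
        · exact Or.inl hv
        · exact Or.inr (Or.inr hv)
    rw [hins X, hins Y]
    simp
  · have heX : e ∉ X := fun h => heY (hXY h)
    have hYc : e ∈ (A ∪ Y)ᶜ := by
      rw [Finset.mem_compl, Finset.mem_union]
      tauto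
    have hXc : e ∈ (A ∪ X)ᶜ := by
      rw [Finset.mem_compl, Finset.mem_union]
      tauto
    have h1 : (A ∪ insert e Y)ᶜ = (A ∪ Y)ᶜ.erase e := by
      rw [Finset.union_insert, Finset.compl_insert]
    have h2 : (A ∪ insert e X)ᶜ = (A ∪ X)ᶜ.erase e := by
      rw [Finset.union_insert, Finset.compl_insert]
    have hsub' : (A ∪ Y)ᶜ.erase e ⊆ (A ∪ X)ᶜ.erase e := by
      apply Finset.erase_subset_erase
      rw [Finset.compl_subset_compl]
      exact Finset.union_subset_union_right hXY
    have hnm : e ∉ (A ∪ X)ᶜ.erase e := Finset.notMem_erase e _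
    have := hf_submod ((A ∪ Y)ᶜ.erase e) ((A ∪ X)ᶜ.erase e) hsub' e hnm
    rw [Finset.insert_erase hXc, Finset.insert_erase hYc] at this
    rw [h1, h2]
    linarith

end Helpers


/-- All groups have size at least 2, `1/2 < α ≤ β ≤ 1`, and
`g S := f (V \ S) = f Sᶜ`.  Suppose `A` satisfies `|A ∩ V i| ≤ |V i| - ⌊α |V i|⌋` for
every `i` and is a `γ`-approximation (w.r.t. `g`) among all sets satisfying these
constraints.  Augmenting `A` with independent uniform random backup sets
`B i ⊆ V i \ A` of size `|V i| - ⌊β |V i|⌋ - |A ∩ V i|` (natural subtraction;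
`B i = ∅` when the lower bound already holds) and returning the complement yields
`E[f(V \ (A ∪ ⋃ i, B i))] ≥ (γ/3) * f S` for every `(α,β)`-fair set `S`. -/
theorem stmt_12 {V : Type*} [Fintype V] [DecidableEq V]
    (m : ℕ) (Vg : Fin m → Finset V)
    (hdisj : ∀ i j : Fin m, i ≠ j → Disjoint (Vg i) (Vg j))
    (hcover : Finset.univ.biUnion Vg = (Finset.univ : Finset V))
    (hsize : ∀ i : Fin m, 2 ≤ (Vg i).card)
    (f : Finset V → ℝ)
    (hf_nonneg : ∀ S : Finset V, 0 ≤ f S)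
    (hf_submod : ∀ X Y : Finset V, X ⊆ Y → ∀ e ∉ Y,
      f (insert e Y) - f Y ≤ f (insert e X) - f X)
    (α β γ : ℝ) (hα : 1 / 2 < α) (hαβ : α ≤ β) (hβ1 : β ≤ 1)
    (hγ0 : 0 ≤ γ) (hγ1 : γ ≤ 1)
    (A : Finset V)
    (hA : ∀ i : Fin m, (A ∩ Vg i).card ≤ (Vg i).card - ⌊α * ((Vg i).card : ℝ)⌋₊)
    (hApx : ∀ T : Finset V,
      (∀ i : Fin m, (T ∩ Vg i).card ≤ (Vg i).card - ⌊α * ((Vg i).card : ℝ)⌋₊) →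
      γ * f (Tᶜ) ≤ f (Aᶜ))
    (k : Fin m → ℕ)
    (hk : ∀ i : Fin m, k i = (Vg i).card - ⌊β * ((Vg i).card : ℝ)⌋₊ - (A ∩ Vg i).card)
    (𝒞 : Finset (Fin m → Finset V))
    (h𝒞 : 𝒞 = Fintype.piFinset fun i => (Vg i \ A).powersetCard (k i)) :
    ∀ S : Finset V,
      (∀ i : Fin m, ⌊α * ((Vg i).card : ℝ)⌋₊ ≤ (S ∩ Vg i).card ∧
        (S ∩ Vg i).card ≤ ⌊β * ((Vg i).card : ℝ)⌋₊) →
      (γ / 3) * f S ≤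
        (∑ B ∈ 𝒞, f ((A ∪ Finset.univ.biUnion fun i => B i)ᶜ)) / (𝒞.card : ℝ) := by

  intro S hS
  classical
  subst h𝒞
  set t : Fin m → Finset (Finset V) := fun j => (Vg j \ A).powersetCard (k j) with ht
  set W : Finset V := Finset.univ.biUnion (fun j => Vg j \ A) with hWdef
  set h : Finset V → ℝ := fun T => f ((A ∪ T)ᶜ) with hhdef
  have hh : ∀ T, 0 ≤ h T := fun T => hf_nonneg _
  have hsub : ∀ X Y : Finset V, X ⊆ Y → ∀ e ∉ Y,
      h (insert e Y) - h Y ≤ h (insert e X) - h X :=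
    fun X Y hXY e he => compl_submod f hf_submod A X Y hXY e he
  -- per-group arithmetic facts
  have hfacts : ∀ i : Fin m, 3 * k i ≤ 2 * (Vg i \ A).card ∧ k i ≤ (Vg i \ A).card := by
    intro i
    have hn := hsize i
    have hwi : (Vg i \ A).card + (Vg i ∩ A).card = (Vg i).card :=
      Finset.card_sdiff_add_card_inter _ _
    have hinter : (Vg i ∩ A).card = (A ∩ Vg i).card := by rw [Finset.inter_comm]
    have hcast2 : (2:ℝ) ≤ ((Vg i).card : ℝ) := by exact_mod_cast hn
    have hfa1 : 1 ≤ ⌊α * ((Vg i).card : ℝ)⌋₊ := by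
      apply Nat.le_floor
      push_cast
      nlinarith
    have hfab : ⌊α * ((Vg i).card : ℝ)⌋₊ ≤ ⌊β * ((Vg i).card : ℝ)⌋₊ :=
      Nat.floor_le_floor (by nlinarith)
    have hfbn : ⌊β * ((Vg i).card : ℝ)⌋₊ ≤ (Vg i).card := by
      have h1 : β * ((Vg i).card : ℝ) ≤ (((Vg i).card : ℕ) : ℝ) := by nlinarith
      have := Nat.floor_le_floor h1
      rwa [Nat.floor_natCast] at this
    have hn2f : (Vg i).card ≤ 2 * ⌊α * ((Vg i).card : ℝ)⌋₊ + 1 := by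
      have h1 : α * ((Vg i).card : ℝ) < (⌊α * ((Vg i).card : ℝ)⌋₊ : ℝ) + 1 :=
        Nat.lt_floor_add_one _
      have h2 : ((Vg i).card : ℝ) < 2 * (⌊α * ((Vg i).card : ℝ)⌋₊ : ℝ) + 2 := by nlinarith
      have h3 : ((Vg i).card : ℝ) < ((2 * ⌊α * ((Vg i).card : ℝ)⌋₊ + 2 : ℕ) : ℝ) := by
        push_cast
        linarith
      have h4 : (Vg i).card < 2 * ⌊α * ((Vg i).card : ℝ)⌋₊ + 2 := by exact_mod_cast h3
      omega
    have hAi := hA i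
    have hki := hk i
    omega
  -- positivity of the number of outcomes
  have hNpos' : 0 < (Fintype.piFinset t).card := by
    rw [Fintype.card_piFinset]
    apply Finset.prod_pos
    intro j _
    rw [ht]
    rw [Finset.card_powersetCard]
    exact Nat.choose_pos (hfacts j).2
  have hNpos : (0:ℝ) < ((Fintype.piFinset t).card : ℝ) := by exact_mod_cast hNpos'
  -- random sets live inside W
  have hRW : ∀ B ∈ Fintype.piFinset t, (Finset.univ.biUnion fun i => B i) ⊆ W := by
    intro B hB u hu
    rw [Finset.mem_biUnion] at hu
    obtain ⟨j, _, hj⟩ := hu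
    rw [Fintype.mem_piFinset] at hB
    have := (Finset.mem_powersetCard.mp (hB j)).1 hj
    rw [hWdef, Finset.mem_biUnion]
    exact ⟨j, Finset.mem_univ j, this⟩
  -- marginal bound
  have hcnt : ∀ u ∈ W,
      (((Fintype.piFinset t).filter fun B => u ∈ Finset.univ.biUnion fun i => B i).card : ℝ)
        ≤ (2/3 : ℝ) * ((Fintype.piFinset t).card : ℝ) := by
    intro u hu
    rw [hWdef, Finset.mem_biUnion] at hu
    obtain ⟨i, _, hui⟩ := hu
    -- rewrite the filtering condition
    have hfe : ((Fintype.piFinset t).filter fun B => u ∈ Finset.univ.biUnion fun i => B i)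
        = ((Fintype.piFinset t).filter fun B => B i ∈ (t i).filter fun s => u ∈ s) := by
      apply Finset.filter_congr
      intro B hB
      rw [Fintype.mem_piFinset] at hB
      constructor
      · intro hmem
        rw [Finset.mem_biUnion] at hmem
        obtain ⟨j, _, hj⟩ := hmem
        have hji : j = i := by
          by_contra hne
          have hsubj := (Finset.mem_powersetCard.mp (hB j)).1 hj
          have h1 : u ∈ Vg j := (Finset.mem_sdiff.mp hsubj).1
          have h2 : u ∈ Vg i := (Finset.mem_sdiff.mp hui).1
          exact (Finset.disjoint_left.mp (hdisj j i hne) h1) h2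
        rw [Finset.mem_filter]
        exact ⟨hB i, hji ▸ hj⟩
      · intro hmem
        rw [Finset.mem_filter] at hmem
        rw [Finset.mem_biUnion]
        exact ⟨i, Finset.mem_univ i, hmem.2⟩
    rw [hfe, ← Fintype.piFinset_update_eq_filter_piFinset_mem t i (Finset.filter_subset _ _)]
    rw [Fintype.card_piFinset, Fintype.card_piFinset]
    -- nat inequality
    have hnat : 3 * (∏ j, ((Function.update t i ((t i).filter fun s => u ∈ s)) j).card)
        ≤ 2 * ∏ j, (t j).card := by
      have hfun : (fun j => ((Function.update t i ((t i).filter fun s => u ∈ s)) j).card)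
          = Function.update (fun j => (t j).card) i ((t i).filter fun s => u ∈ s).card := by
        funext j
        by_cases hji : j = i
        · subst hji; simp
        · simp [Function.update_apply, hji]
      rw [hfun, Finset.prod_update_of_mem (Finset.mem_univ i)]
      have hsplit : ∏ j, (t j).card
          = (t i).card * ∏ j ∈ Finset.univ \ {i}, (t j).card := by
        rw [Finset.sdiff_singleton_eq_erase, ← Finset.mul_prod_erase Finset.univ _ (Finset.mem_univ i)]
      rw [hsplit]
      have hcount := count_mem_powersetCard (Vg i \ A) u hui (k i) (hfacts i).1
      calc 3 * (((t i).filter fun s => u ∈ s).card * ∏ j ∈ Finset.univ \ {i}, (t j).card)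
          = (3 * ((t i).filter fun s => u ∈ s).card) * ∏ j ∈ Finset.univ \ {i}, (t j).card := by
            ring
        _ ≤ (2 * (t i).card) * ∏ j ∈ Finset.univ \ {i}, (t j).card :=
            Nat.mul_le_mul_right _ hcount
        _ = 2 * ((t i).card * ∏ j ∈ Finset.univ \ {i}, (t j).card) := by ring
    have hnat' : (3:ℝ) * (∏ j, ((Function.update t i ((t i).filter fun s => u ∈ s)) j).card : ℕ)
        ≤ (2:ℝ) * (∏ j, (t j).card : ℕ) := by exact_mod_cast hnat
    linarith
  -- the key averaging bound
  have key := avg_bound h hh hsub (Fintype.piFinset t)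
    (fun B => Finset.univ.biUnion fun i => B i) W hRW (2/3) (by norm_num) hcnt
  -- feasibility of Sᶜ
  have hfeas : ∀ i : Fin m, (Sᶜ ∩ Vg i).card ≤ (Vg i).card - ⌊α * ((Vg i).card : ℝ)⌋₊ := by
    intro i
    have he : Sᶜ ∩ Vg i = Vg i \ S := by
      ext v
      simp only [Finset.mem_inter, Finset.mem_compl, Finset.mem_sdiff]
      tauto
    have hc : (Vg i \ S).card + (Vg i ∩ S).card = (Vg i).card :=
      Finset.card_sdiff_add_card_inter _ _
    have hc2 : (Vg i ∩ S).card = (S ∩ Vg i).card := by rw [Finset.inter_comm]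
    have := (hS i).1
    rw [he]
    omega
  have hT := hApx Sᶜ hfeas
  rw [compl_compl] at hT
  -- finish
  rw [le_div_iff₀ hNpos]
  have hEmpty : h ∅ = f Aᶜ := by
    rw [hhdef]
    simp
  rw [hEmpty] at key
  have hprod : γ * f S * ((Fintype.piFinset t).card : ℝ)
      ≤ f Aᶜ * ((Fintype.piFinset t).card : ℝ) :=
    mul_le_mul_of_nonneg_right hT hNpos.le
  have h23 : (1 - 2/3 : ℝ) = 1/3 := by norm_num
  rw [h23] at key
  linarith
end

section
/- Let V be a finite set partitioned into m disjoint groups V_1, …, V_m, let f : 2^V → ℝ be nonnegative and submodular, let α, β be reals with 0 ≤ α ≤ 1/2 and α ≤ β ≤ 1, let c be a nonnegative integer, and let γ ∈ [0,1]. Suppose A ⊆ V satisfies |A ∩ V_i| ≤ ⌊β·|V_i|⌋ for every i and ∑_{i∈[m]} max(⌊α·|V_i|⌋, |A ∩ V_i|) ≤ c, and f(A) ≥ γ·f(T) for every T ⊆ V satisfying these same constraints. For each group i with |A ∩ V_i| < ⌊α·|V_i|⌋, let B_i be a uniform random subset of V_i ∖ A of size ⌊α·|V_i|⌋ − |A ∩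 V_i|, sampled independently across groups, and B_i = ∅ otherwise. Then E[f(A ∪ (⋃_{i∈[m]} B_i))] ≥ (γ/2)·f(S) for every (α,β)-fair set S ⊆ V with |S| ≤ c. -/
private lemma submod_union_inter' {V : Type*} [DecidableEq V] (f : Finset V → ℝ)
    (hs : ∀ X Y : Finset V, X ⊆ Y → ∀ e ∉ Y,
      f (insert e Y) - f Y ≤ f (insert e X) - f X) :
    ∀ X Y : Finset V, f (X ∪ Y) + f (X ∩ Y) ≤ f X + f Y := by
  have key : ∀ n (X Y : Finset V), (Y \ X).card = n →
      f (X ∪ Y) + f (X ∩ Y) ≤ f X + f Y := by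
    intro n
    induction n with
    | zero =>
      intro X Y h
      have hYX : Y ⊆ X := by
        rwa [Finset.card_eq_zero, Finset.sdiff_eq_empty_iff_subset] at h
      rw [Finset.union_eq_left.mpr hYX, Finset.inter_eq_right.mpr hYX]
    | succ n ih =>
      intro X Y h
      have hne : (Y \ X).Nonempty := by
        rw [← Finset.card_pos, h]; omega
      obtain ⟨e, he⟩ := hne
      have heY : e ∈ Y := (Finset.mem_sdiff.mp he).1
      have heX : e ∉ X := (Finset.mem_sdiff.mp he).2
      have hcard : (Y \ insert e X).card = n := by
        have : Y \ insert e X = (Y \ X).erase e := by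
          ext x; simp [Finset.mem_sdiff, Finset.mem_erase, Finset.mem_insert]
          tauto
        rw [this, Finset.card_erase_of_mem he, h]
        omega
      have h1 := ih (insert e X) Y hcard
      have h2 : insert e X ∪ Y = X ∪ Y := by
        ext x; simp only [Finset.mem_union, Finset.mem_insert]
        constructor
        · rintro ((rfl | hx) | hx)
          · exact Or.inr heY
          · exact Or.inl hx
          · exact Or.inr hx
        · rintro (hx | hx)
          · exact Or.inl (Or.inr hx)
          · exact Or.inr hx
      have h3 : insert e X ∩ Y = insert e (X ∩ Y) := by
        ext x; simp only [Finset.mem_inter, Finset.mem_insert]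
        constructor
        · rintro ⟨rfl | hx, hy⟩
          · exact Or.inl rfl
          · exact Or.inr ⟨hx, hy⟩
        · rintro (rfl | ⟨hx, hy⟩)
          · exact ⟨Or.inl rfl, heY⟩
          · exact ⟨Or.inr hx, hy⟩
      have h4 := hs (X ∩ Y) X Finset.inter_subset_left e heX
      rw [h2, h3] at h1
      linarith
  intro X Y; exact key _ X Y rfl

/-- Suppose `0 ≤ α ≤ 1/2`, `α ≤ β ≤ 1`, and `A` satisfies the
constraints of problem P.B (`|A ∩ V i| ≤ ⌊β |V i|⌋` and
`∑ i, max ⌊α |V i|⌋ |A ∩ V i| ≤ c`) and is a `γ`-approximation among all sets satisfying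
them.  Augmenting `A` with independent uniform random backup sets `B i ⊆ V i \ A` of
size `⌊α |V i|⌋ - |A ∩ V i|` (natural subtraction; `B i = ∅` when the lower bound already
holds) yields `E[f(A ∪ ⋃ i, B i)] ≥ (γ/2) * f S` for every `(α,β)`-fair set `S` with
`|S| ≤ c`. -/
theorem stmt_15 {V : Type*} [Fintype V] [DecidableEq V]
    (m : ℕ) (Vg : Fin m → Finset V)
    (hdisj : ∀ i j : Fin m, i ≠ j → Disjoint (Vg i) (Vg j))
    (hcover : Finset.univ.biUnion Vg = (Finset.univ : Finset V))
    (f : Finset V → ℝ)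
    (hf_nonneg : ∀ S : Finset V, 0 ≤ f S)
    (hf_submod : ∀ X Y : Finset V, X ⊆ Y → ∀ e ∉ Y,
      f (insert e Y) - f Y ≤ f (insert e X) - f X)
    (α β γ : ℝ) (hα0 : 0 ≤ α) (hα : α ≤ 1 / 2) (hαβ : α ≤ β) (hβ1 : β ≤ 1)
    (hγ0 : 0 ≤ γ) (hγ1 : γ ≤ 1)
    (c : ℕ)
    (A : Finset V)
    (hA : ∀ i : Fin m, (A ∩ Vg i).card ≤ ⌊β * ((Vg i).card : ℝ)⌋₊)
    (hAc : ∑ i : Fin m, max ⌊α * ((Vg i).card : ℝ)⌋₊ ((A ∩ Vg i).card) ≤ c)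
    (hApx : ∀ T : Finset V,
      (∀ i : Fin m, (T ∩ Vg i).card ≤ ⌊β * ((Vg i).card : ℝ)⌋₊) →
      ∑ i : Fin m, max ⌊α * ((Vg i).card : ℝ)⌋₊ ((T ∩ Vg i).card) ≤ c →
      γ * f T ≤ f A)
    (k : Fin m → ℕ)
    (hk : ∀ i : Fin m, k i = ⌊α * ((Vg i).card : ℝ)⌋₊ - (A ∩ Vg i).card)
    (𝒞 : Finset (Fin m → Finset V))
    (h𝒞 : 𝒞 = Fintype.piFinset fun i => (Vg i \ A).powersetCard (k i)) :
    ∀ S : Finset V,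
      (∀ i : Fin m, ⌊α * ((Vg i).card : ℝ)⌋₊ ≤ (S ∩ Vg i).card ∧
        (S ∩ Vg i).card ≤ ⌊β * ((Vg i).card : ℝ)⌋₊) →
      S.card ≤ c →
      (γ / 2) * f S ≤
        (∑ B ∈ 𝒞, f (A ∪ Finset.univ.biUnion fun i => B i)) / (𝒞.card : ℝ) := by
  intro S hS hSc
  classical
  -- basic arithmetic facts per group
  have hfloor : ∀ i : Fin m, 2 * ⌊α * ((Vg i).card : ℝ)⌋₊ ≤ (Vg i).card := by
    intro i
    have h1 : (⌊α * ((Vg i).card : ℝ)⌋₊ : ℝ) ≤ α * ((Vg i).card : ℝ) :=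
      Nat.floor_le (by positivity)
    have h2 : α * ((Vg i).card : ℝ) ≤ ((Vg i).card : ℝ) / 2 := by
      have hc0 : (0:ℝ) ≤ ((Vg i).card : ℝ) := Nat.cast_nonneg _
      nlinarith
    have h3 : ((2 * ⌊α * ((Vg i).card : ℝ)⌋₊ : ℕ) : ℝ) ≤ ((Vg i).card : ℝ) := by
      push_cast; linarith
    exact_mod_cast h3
  have haleb : ∀ i : Fin m, (A ∩ Vg i).card ≤ (Vg i).card :=
    fun i => Finset.card_le_card Finset.inter_subset_right
  have hWcard : ∀ i : Fin m, (Vg i \ A).card = (Vg i).card - (A ∩ Vg i).card := by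
    intro i
    rw [← Finset.sdiff_inter_self_left (Vg i) A,
      Finset.card_sdiff_of_subset Finset.inter_subset_left, Finset.inter_comm]
  have hk2 : ∀ i : Fin m, k i ≤ (Vg i \ A).card - k i ∧ k i ≤ (Vg i \ A).card := by
    intro i
    have h1 := hfloor i
    have h2 := haleb i
    rw [hWcard i, hk i]
    omega
  -- the companion family
  set D : (Fin m → Finset V) → Finset (Fin m → Finset V) :=
    fun B => Fintype.piFinset fun i => ((Vg i \ A) \ B i).powersetCard (k i) with hD
  have hmemC : ∀ B, B ∈ 𝒞 ↔ ∀ i, B i ⊆ Vg i \ A ∧ (B i).card = k i := by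
    intro B
    rw [h𝒞, Fintype.mem_piFinset]
    exact forall_congr' fun i => Finset.mem_powersetCard
  have hmemD : ∀ B B', B' ∈ D B ↔ ∀ i, B' i ⊆ (Vg i \ A) \ B i ∧ (B' i).card = k i := by
    intro B B'
    rw [hD, Fintype.mem_piFinset]
    exact forall_congr' fun i => Finset.mem_powersetCard
  have hDsub : ∀ B, D B ⊆ 𝒞 := by
    intro B B' hB'
    rw [hmemD] at hB'
    rw [hmemC]
    intro i
    exact ⟨(hB' i).1.trans (Finset.sdiff_subset), (hB' i).2⟩
  have hsym : ∀ B ∈ 𝒞, ∀ B' ∈ 𝒞, (B' ∈ D B ↔ B ∈ D B') := by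
    intro B hB B' hB'
    rw [hmemC] at hB hB'
    rw [hmemD, hmemD]
    constructor
    · intro h i
      have hd : Disjoint (B' i) (B i) := (Finset.subset_sdiff.mp (h i).1).2
      exact ⟨Finset.subset_sdiff.mpr ⟨(hB i).1, hd.symm⟩, (hB i).2⟩
    · intro h i
      have hd : Disjoint (B i) (B' i) := (Finset.subset_sdiff.mp (h i).1).2
      exact ⟨Finset.subset_sdiff.mpr ⟨(hB' i).1, hd.symm⟩, (hB' i).2⟩
  -- cardinalities
  set N : ℕ := ∏ i : Fin m, ((Vg i \ A).card - k i).choose (k i) with hN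
  have hDcard : ∀ B ∈ 𝒞, (D B).card = N := by
    intro B hB
    rw [hmemC] at hB
    rw [hD, Fintype.card_piFinset, hN]
    refine Finset.prod_congr rfl fun i _ => ?_
    rw [Finset.card_powersetCard, Finset.card_sdiff_of_subset (hB i).1, (hB i).2]
  have hNpos : 0 < N := by
    rw [hN]
    exact Finset.prod_pos fun i _ => Nat.choose_pos (hk2 i).1
  have hCpos : 0 < 𝒞.card := by
    rw [h𝒞, Fintype.card_piFinset]
    refine Finset.prod_pos fun i _ => ?_
    rw [Finset.card_powersetCard]
    exact Nat.choose_pos (hk2 i).2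
  -- the pair inequality
  set g : (Fin m → Finset V) → ℝ :=
    fun B => f (A ∪ Finset.univ.biUnion fun i => B i) with hg
  have hpair : ∀ B ∈ 𝒞, ∀ B' ∈ D B, f A ≤ g B + g B' := by
    intro B hB B' hB'
    have hBm := (hmemC B).mp hB
    have hB'm := (hmemD B B').mp hB'
    have hint : (A ∪ Finset.univ.biUnion fun i => B i) ∩
        (A ∪ Finset.univ.biUnion fun i => B' i) = A := by
      apply Finset.Subset.antisymm
      · intro x hx
        rw [Finset.mem_inter, Finset.mem_union, Finset.mem_union] at hx
        obtain ⟨hx1, hx2⟩ := hx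
        rcases hx1 with hx1 | hx1
        · exact hx1
        rcases hx2 with hx2 | hx2
        · exact hx2
        exfalso
        rw [Finset.mem_biUnion] at hx1 hx2
        obtain ⟨i, -, hxi⟩ := hx1
        obtain ⟨j, -, hxj⟩ := hx2
        by_cases hij : i = j
        · subst hij
          have := (hB'm i).1 hxj
          rw [Finset.mem_sdiff] at this
          exact this.2 hxi
        · have h1 : x ∈ Vg i := (Finset.mem_sdiff.mp ((hBm i).1 hxi)).1
          have h2 : x ∈ Vg j :=
            (Finset.mem_sdiff.mp (Finset.sdiff_subset ((hB'm j).1 hxj))).1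
          exact Finset.disjoint_left.mp (hdisj i j hij) h1 h2
      · intro x hx
        rw [Finset.mem_inter, Finset.mem_union, Finset.mem_union]
        exact ⟨Or.inl hx, Or.inl hx⟩
    have hsub := submod_union_inter' f hf_submod
      (A ∪ Finset.univ.biUnion fun i => B i)
      (A ∪ Finset.univ.biUnion fun i => B' i)
    rw [hint] at hsub
    have h0 := hf_nonneg ((A ∪ Finset.univ.biUnion fun i => B i) ∪
      (A ∪ Finset.univ.biUnion fun i => B' i))
    rw [hg]
    dsimp only
    linarith
  set T : ℝ := ∑ B ∈ 𝒞, g B with hT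
  -- the swap identity
  have hswap : ∑ B ∈ 𝒞, ∑ B' ∈ D B, g B' = (N : ℝ) * T := by
    calc ∑ B ∈ 𝒞, ∑ B' ∈ D B, g B'
        = ∑ B ∈ 𝒞, ∑ B' ∈ 𝒞 ∩ D B, g B' := by
          refine Finset.sum_congr rfl fun B hB => ?_
          rw [Finset.inter_eq_right.mpr (hDsub B)]
      _ = ∑ B ∈ 𝒞, ∑ B' ∈ 𝒞, if B' ∈ D B then g B' else 0 := by
          refine Finset.sum_congr rfl fun B hB => ?_
          rw [Finset.sum_ite_mem]
      _ = ∑ B' ∈ 𝒞, ∑ B ∈ 𝒞, if B' ∈ D B then g B' else 0 := Finset.sum_comm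
      _ = ∑ B' ∈ 𝒞, ∑ B ∈ 𝒞, if B ∈ D B' then g B' else 0 := by
          refine Finset.sum_congr rfl fun B' hB' => ?_
          refine Finset.sum_congr rfl fun B hB => ?_
          rw [if_congr (hsym B hB B' hB') rfl rfl]
      _ = ∑ B' ∈ 𝒞, ∑ B ∈ 𝒞 ∩ D B', g B' := by
          refine Finset.sum_congr rfl fun B' hB' => ?_
          rw [Finset.sum_ite_mem]
      _ = ∑ B' ∈ 𝒞, (N : ℝ) * g B' := by
          refine Finset.sum_congr rfl fun B' hB' => ?_
          rw [Finset.inter_eq_right.mpr (hDsub B'), Finset.sum_const,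
            hDcard B' hB', nsmul_eq_mul]
      _ = (N : ℝ) * T := by rw [hT, Finset.mul_sum]
  have hconst : ∑ B ∈ 𝒞, ∑ B' ∈ D B, g B = (N : ℝ) * T := by
    rw [hT, Finset.mul_sum]
    refine Finset.sum_congr rfl fun B hB => ?_
    rw [Finset.sum_const, hDcard B hB, nsmul_eq_mul]
  have hlow : ∀ B ∈ 𝒞, (N : ℝ) * f A ≤ ∑ B' ∈ D B, (g B + g B') := by
    intro B hB
    have h := Finset.card_nsmul_le_sum (D B) (fun B' => g B + g B') (f A)
      (fun B' hB' => hpair B hB B' hB')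
    rw [hDcard B hB, nsmul_eq_mul] at h
    exact h
  have hmain : (𝒞.card : ℝ) * ((N : ℝ) * f A) ≤ (N : ℝ) * T + (N : ℝ) * T := by
    have h1 : ∑ B ∈ 𝒞, (N : ℝ) * f A ≤ ∑ B ∈ 𝒞, ∑ B' ∈ D B, (g B + g B') :=
      Finset.sum_le_sum hlow
    rw [Finset.sum_const, nsmul_eq_mul] at h1
    have h2 : ∑ B ∈ 𝒞, ∑ B' ∈ D B, (g B + g B')
        = (N : ℝ) * T + (N : ℝ) * T := by
      have : ∀ B ∈ 𝒞, ∑ B' ∈ D B, (g B + g B')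
          = (∑ B' ∈ D B, g B) + ∑ B' ∈ D B, g B' :=
        fun B _ => Finset.sum_add_distrib
      rw [Finset.sum_congr rfl this, Finset.sum_add_distrib, hconst, hswap]
    linarith [h2 ▸ h1]
  have hNR : (0:ℝ) < (N : ℝ) := by exact_mod_cast hNpos
  have hfin : (𝒞.card : ℝ) * f A ≤ 2 * T := by
    have h2 : (N : ℝ) * ((𝒞.card : ℝ) * f A) ≤ (N : ℝ) * (2 * T) := by ring_nf; ring_nf at hmain; linarith
    exact (mul_le_mul_iff_right₀ hNR).mp h2
  -- f A ≥ γ f S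
  have hex : ∀ x : V, ∃ i, x ∈ Vg i := by
    intro x
    have hx : x ∈ Finset.univ.biUnion Vg := hcover ▸ Finset.mem_univ x
    obtain ⟨i, -, hi⟩ := Finset.mem_biUnion.mp hx
    exact ⟨i, hi⟩
  have hUS : Finset.univ.biUnion (fun i => S ∩ Vg i) = S := by
    ext x
    simp only [Finset.mem_biUnion, Finset.mem_univ, true_and, Finset.mem_inter]
    constructor
    · rintro ⟨i, hxS, -⟩; exact hxS
    · intro hx
      obtain ⟨i, hi⟩ := hex x
      exact ⟨i, hx, hi⟩
  have hScard : ∑ i : Fin m, (S ∩ Vg i).card = S.card := by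
    have hd : ∀ i ∈ (Finset.univ : Finset (Fin m)), ∀ j ∈ (Finset.univ : Finset (Fin m)),
        i ≠ j → Disjoint (S ∩ Vg i) (S ∩ Vg j) := by
      intro i _ j _ hij
      exact Finset.disjoint_of_subset_left Finset.inter_subset_right
        (Finset.disjoint_of_subset_right Finset.inter_subset_right (hdisj i j hij))
    rw [← Finset.card_biUnion hd, hUS]
  have hfA : γ * f S ≤ f A := by
    refine hApx S (fun i => (hS i).2) ?_
    calc ∑ i : Fin m, max ⌊α * ((Vg i).card : ℝ)⌋₊ ((S ∩ Vg i).card)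
        = ∑ i : Fin m, (S ∩ Vg i).card :=
          Finset.sum_congr rfl fun i _ => max_eq_right (hS i).1
      _ = S.card := hScard
      _ ≤ c := hSc
  -- finish
  have hCR : (0:ℝ) < (𝒞.card : ℝ) := by exact_mod_cast hCpos
  rw [le_div_iff₀ hCR]
  have h1 : (𝒞.card : ℝ) * (γ * f S) ≤ (𝒞.card : ℝ) * f A :=
    mul_le_mul_of_nonneg_left hfA (le_of_lt hCR)
  nlinarith [h1, hfin]
end

section
/- Let V be a finite set partitioned into m disjoint groups V_1, …, V_m, let g : 2^V → ℝ be nonnegative and submodular, let α be a real with 1/2 < α ≤ 1, and let A ⊆ V. Assume that every group i ∈ [m] with |A ∩ V_i| < |V_i| − ⌊α·|V_i|⌋ satisfies |V_i| ≥ 2. For each such group i, let B_i be a uniform random subset of V_i ∖ A of size |V_i| − ⌊α·|V_i|⌋ − |A ∩ V_i|, sampled independently across groups; for all other groups set B_i = ∅. Then E[g(A ∪ (⋃_{i∈[m]} B_i))] ≥ (1/3)·g(A). -/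
open Finset

section Aux

lemma submod_ui {V : Type*} [DecidableEq V] (g : Finset V → ℝ)
    (hsub : ∀ X Y : Finset V, X ⊆ Y → ∀ e ∉ Y,
      g (insert e Y) - g Y ≤ g (insert e X) - g X) :
    ∀ (X Y : Finset V), g (X ∪ Y) + g (X ∩ Y) ≤ g X + g Y := by
  intro X Y
  generalize hn : (X \ Y).card = n
  induction n generalizing X with
  | zero =>
    have hXY : X ⊆ Y := by
      rw [← Finset.sdiff_eq_empty_iff_subset]
      exact Finset.card_eq_zero.mp hn
    rw [Finset.union_eq_right.mpr hXY, Finset.inter_eq_left.mpr hXY]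
    linarith
  | succ n ih =>
    obtain ⟨e, he⟩ : (X \ Y).Nonempty := Finset.card_pos.mp (by omega)
    have heX : e ∈ X := (Finset.mem_sdiff.mp he).1
    have heY : e ∉ Y := (Finset.mem_sdiff.mp he).2
    set X' := X.erase e with hX'
    have heX' : e ∉ X' := Finset.notMem_erase e X
    have heXY : e ∉ X' ∪ Y := by simp [heX', heY]
    have key := hsub X' (X' ∪ Y) Finset.subset_union_left e heXY
    have hins1 : insert e (X' ∪ Y) = X ∪ Y := by
      rw [← Finset.insert_union, Finset.insert_erase heX]
    have hins2 : insert e X' = X := Finset.insert_erase heX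
    have hsd : X' \ Y = (X \ Y).erase e := by
      ext x; simp [Finset.mem_erase, Finset.mem_sdiff, hX']; tauto
    have hcard : (X' \ Y).card = n := by
      rw [hsd, Finset.card_erase_of_mem he, hn]; omega
    have hIH := ih X' hcard
    have hint : X' ∩ Y = X ∩ Y := by
      ext x; simp only [Finset.mem_inter, hX', Finset.mem_erase]
      constructor
      · tauto
      · rintro ⟨hx, hy⟩; exact ⟨⟨fun h => heY (h ▸ hy), hx⟩, hy⟩
    rw [hins1, hins2] at key
    rw [hint] at hIH
    linarith

lemma exists_perm_image {β : Type*} [Fintype β] [DecidableEq β] (s t : Finset β)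
    (h : s.card = t.card) : ∃ σ : Equiv.Perm β, s.image σ = t := by
  have e : {x // x ∈ s} ≃ {x // x ∈ t} := Finset.equivOfCardEq h
  refine ⟨e.extendSubtype, ?_⟩
  apply Finset.eq_of_subset_of_card_le
  · intro x hx
    obtain ⟨y, hy, rfl⟩ := Finset.mem_image.mp hx
    exact e.extendSubtype_mem y hy
  · rw [Finset.card_image_of_injective _ (Equiv.injective _), h]

noncomputable def rotP (n d : ℕ) : Equiv.Perm (Fin n) :=
  Equiv.ofBijective (fun x => ⟨(x.1 + d) % n, Nat.mod_lt _ x.pos⟩)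
    (Finite.injective_iff_bijective.mp (by
      intro x y hxy
      have h : (x.1 + d) % n = (y.1 + d) % n := congrArg Fin.val hxy
      have h2 : x.1 % n = y.1 % n := Nat.ModEq.add_right_cancel' d h
      rwa [Nat.mod_eq_of_lt x.isLt, Nat.mod_eq_of_lt y.isLt, ← Fin.ext_iff] at h2))

lemma rotP_apply {n d : ℕ} (x : Fin n) : (rotP n d x : ℕ) = (x.1 + d) % n := rfl

lemma arcs_arith {n k x j j' : ℕ} (h3 : 3 * k ≤ 2 * n) (hkn : k ≤ n)
    (hx : x < k) (hj : j < k) (hj' : j' < k)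
    (hx1 : x = (j + (n - k)) % n) (hx2 : x = (j' + 2 * (n - k)) % n) : False := by
  have hn : 0 < n := by omega
  have h1 : j + (n - k) < n := by omega
  have hx1' : x = j + (n - k) := by rw [hx1, Nat.mod_eq_of_lt h1]
  have hxk : n - k ≤ x := by omega
  have e1 : (x + 2 * k) % n = j' % n := by
    rw [hx2, Nat.mod_add_mod]
    have h5 : j' + 2 * (n - k) + 2 * k = j' + n * 2 := by omega
    rw [h5, Nat.add_mul_mod_self_left]
  have hj'n : j' % n = j' := Nat.mod_eq_of_lt (by omega)
  have hle : n ≤ x + 2 * k := by omega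
  have hlt : x + 2 * k - n < n := by omega
  have e2 : (x + 2 * k) % n = x + 2 * k - n := by
    rw [Nat.mod_eq_sub_mod hle, Nat.mod_eq_of_lt hlt]
  omega

end Aux

/-- Assume `1/2 < α ≤ 1` and that every group `i` with
`|A ∩ V i| < |V i| - ⌊α |V i|⌋` has at least two items.  For each such group, a uniform
random subset `B i` of `V i \ A` of size `|V i| - ⌊α |V i|⌋ - |A ∩ V i|` is drawn,
independently across groups (`B i = ∅` otherwise; natural subtraction makes `k i = 0` in
that case).  Averaging over the product family `𝒞` of candidate choices,
`E[g(A ∪ ⋃ i, B i)] ≥ (1/3) * g A`. -/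
theorem stmt_17 {V : Type*} [Fintype V] [DecidableEq V]
    (m : ℕ) (Vg : Fin m → Finset V)
    (hdisj : ∀ i j : Fin m, i ≠ j → Disjoint (Vg i) (Vg j))
    (hcover : Finset.univ.biUnion Vg = (Finset.univ : Finset V))
    (g : Finset V → ℝ)
    (hg_nonneg : ∀ S : Finset V, 0 ≤ g S)
    (hg_submod : ∀ X Y : Finset V, X ⊆ Y → ∀ e ∉ Y,
      g (insert e Y) - g Y ≤ g (insert e X) - g X)
    (α : ℝ) (hα : 1 / 2 < α) (hα1 : α ≤ 1)
    (A : Finset V)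
    (hsize : ∀ i : Fin m,
      (A ∩ Vg i).card < (Vg i).card - ⌊α * ((Vg i).card : ℝ)⌋₊ → 2 ≤ (Vg i).card)
    (k : Fin m → ℕ)
    (hk : ∀ i : Fin m, k i = (Vg i).card - ⌊α * ((Vg i).card : ℝ)⌋₊ - (A ∩ Vg i).card)
    (𝒞 : Finset (Fin m → Finset V))
    (h𝒞 : 𝒞 = Fintype.piFinset fun i => (Vg i \ A).powersetCard (k i)) :
    (1 / 3 : ℝ) * g A ≤
      (∑ B ∈ 𝒞, g (A ∪ Finset.univ.biUnion fun i => B i)) / (𝒞.card : ℝ) := by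
  classical
  set W : Fin m → Finset V := fun i => Vg i \ A with hW
  -- cardinality facts
  have hWcard : ∀ i, (W i).card = (Vg i).card - (A ∩ Vg i).card := by
    intro i
    have h1 := Finset.card_sdiff_add_card_inter (Vg i) A
    have h2 : (Vg i ∩ A).card = (A ∩ Vg i).card := by rw [Finset.inter_comm]
    simp only [hW]; omega
  have hkw : ∀ i, k i ≤ (W i).card := by
    intro i
    have : (A ∩ Vg i).card ≤ (Vg i).card := Finset.card_le_card Finset.inter_subset_right
    rw [hWcard i, hk i]; omega
  have h3k : ∀ i, 3 * k i ≤ 2 * (W i).card := by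
    intro i
    by_cases h0 : k i = 0
    · simp [h0]
    · have hlt : (A ∩ Vg i).card < (Vg i).card - ⌊α * ((Vg i).card : ℝ)⌋₊ := by
        rw [hk i] at h0; omega
      have hn2 : 2 ≤ (Vg i).card := hsize i hlt
      have hfl : (Vg i).card / 2 ≤ ⌊α * ((Vg i).card : ℝ)⌋₊ := by
        apply Nat.le_floor
        have h1 : (((Vg i).card / 2 : ℕ) : ℝ) ≤ ((Vg i).card : ℝ) / 2 :=
          Nat.cast_div_le
        have h2 : ((Vg i).card : ℝ) / 2 ≤ α * ((Vg i).card : ℝ) := by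
          nlinarith [Nat.cast_nonneg (α := ℝ) (Vg i).card]
        linarith
      have hub : ⌊α * ((Vg i).card : ℝ)⌋₊ ≤ (Vg i).card := by
        calc ⌊α * ((Vg i).card : ℝ)⌋₊ ≤ ⌊((Vg i).card : ℝ)⌋₊ :=
              Nat.floor_le_floor (by nlinarith [Nat.cast_nonneg (α := ℝ) (Vg i).card])
          _ = (Vg i).card := Nat.floor_natCast _
      rw [hWcard i, hk i]; omega
  -- the embedding of positions into V
  set emb : ∀ i, Fin ((W i).card) → V := fun i x => ((W i).equivFin.symm x : V) with hemb
  have hembI : ∀ i, Function.Injective (emb i) :=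
    fun i => Subtype.val_injective.comp (Equiv.injective _)
  have hembW : ∀ i x, emb i x ∈ W i := fun i x => Finset.coe_mem _
  -- arcs
  set arc0 : ∀ i, Finset (Fin ((W i).card)) := fun i =>
    (Finset.range (k i)).attachFin
      (fun v hv => lt_of_lt_of_le (Finset.mem_range.mp hv) (hkw i)) with harc0
  have harc0card : ∀ i, (arc0 i).card = k i := by
    intro i; rw [harc0]; simp [Finset.card_attachFin]
  have harc0mem : ∀ i (x : Fin ((W i).card)), x ∈ arc0 i ↔ x.1 < k i := by
    intro i x; rw [harc0]; simp [Finset.mem_attachFin]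
  set Ω := ∀ i, Equiv.Perm (Fin ((W i).card)) with hΩ
  set r1 : ∀ i, Equiv.Perm (Fin ((W i).card)) :=
    fun i => rotP ((W i).card) ((W i).card - k i) with hr1
  set r2 : ∀ i, Equiv.Perm (Fin ((W i).card)) :=
    fun i => rotP ((W i).card) (2 * ((W i).card - k i)) with hr2
  -- arcs have empty triple intersection
  have harc : ∀ i, (arc0 i ∩ (arc0 i).image (r1 i)) ∩ (arc0 i).image (r2 i) = ∅ := by
    intro i
    rw [Finset.eq_empty_iff_forall_notMem]
    intro x hx
    have hx12 := Finset.mem_inter.mp hx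
    have hx2 := hx12.2
    have hx0 := (Finset.mem_inter.mp hx12.1).1
    have hx1 := (Finset.mem_inter.mp hx12.1).2
    have hx0' : x.1 < k i := (harc0mem i x).mp hx0
    obtain ⟨j, hj, rfl2⟩ := Finset.mem_image.mp hx1
    obtain ⟨j', hj', rfl3⟩ := Finset.mem_image.mp hx2
    have hjlt : j.1 < k i := (harc0mem i j).mp hj
    have hj'lt : j'.1 < k i := (harc0mem i j').mp hj'
    have e1 : x.1 = (j.1 + ((W i).card - k i)) % (W i).card := by
      rw [← rfl2]; rfl
    have e2 : x.1 = (j'.1 + 2 * ((W i).card - k i)) % (W i).card := by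
      rw [← rfl3]; rfl
    exact arcs_arith (h3k i) (hkw i) hx0' hjlt hj'lt e1 e2
  -- the sampling map
  set X : Ω → (Fin m → Finset V) := fun π i => (arc0 i).image (fun x => emb i (π i x))
    with hX
  have hXinj : ∀ (π : Ω) i, Function.Injective (fun x => emb i (π i x)) :=
    fun π i => (hembI i).comp (Equiv.injective _)
  have hXW : ∀ (π : Ω) i, X π i ⊆ W i := by
    intro π i v hv
    obtain ⟨x, _, rfl⟩ := Finset.mem_image.mp hv
    exact hembW i _
  have hXcard : ∀ (π : Ω) i, (X π i).card = k i := by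
    intro π i
    rw [hX]
    rw [Finset.card_image_of_injective _ (hXinj π i), harc0card i]
  have hXmem : ∀ π : Ω, X π ∈ 𝒞 := by
    intro π
    rw [h𝒞, Fintype.mem_piFinset]
    intro i
    exact Finset.mem_powersetCard.mpr ⟨hXW π i, hXcard π i⟩
  -- the "position set" of a subset of W i
  set dn : ∀ i, Finset V → Finset (Fin ((W i).card)) := fun i s =>
    Finset.univ.filter (fun x => emb i x ∈ s) with hdn
  have hup : ∀ i (s : Finset V), s ⊆ W i → (dn i s).image (emb i) = s := by
    intro i s hs
    ext v
    simp only [hdn, Finset.mem_image, Finset.mem_filter, Finset.mem_univ, true_and]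
    constructor
    · rintro ⟨x, hx, rfl⟩; exact hx
    · intro hv
      refine ⟨(W i).equivFin ⟨v, hs hv⟩, ?_, ?_⟩
      · rw [hemb]; simp only [Equiv.symm_apply_apply]; exact hv
      · rw [hemb]; simp
  have hdncard : ∀ i (s : Finset V), s ⊆ W i → (dn i s).card = s.card := by
    intro i s hs
    calc (dn i s).card = ((dn i s).image (emb i)).card :=
          (Finset.card_image_of_injective _ (hembI i)).symm
      _ = s.card := by rw [hup i s hs]
  have hdnuniq : ∀ i (u : Finset (Fin ((W i).card))) (s : Finset V), s ⊆ W i →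
      u.image (emb i) = s → u = dn i s := by
    intro i u s hs h
    apply Finset.image_injective (hembI i)
    rw [h, hup i s hs]
  -- fibers of X over 𝒞 all have the same cardinality
  set fib : (Fin m → Finset V) → Finset Ω := fun B =>
    Finset.univ.filter (fun π => X π = B) with hfib
  have step : ∀ (B B' : Fin m → Finset V), B ∈ 𝒞 → B' ∈ 𝒞 →
      ∀ (δ : ∀ i, Equiv.Perm (Fin ((W i).card))),
      (∀ i, (dn i (B i)).image (δ i) = dn i (B' i)) →
      ∀ π : Ω, X π = B → X (fun i => δ i * π i) = B' := by
    intro B B' hB hB' δ hδ π hπ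
    have hBW : ∀ i, B i ⊆ W i := by
      intro i
      rw [h𝒞, Fintype.mem_piFinset] at hB
      exact (Finset.mem_powersetCard.mp (hB i)).1
    have hB'W : ∀ i, B' i ⊆ W i := by
      intro i
      rw [h𝒞, Fintype.mem_piFinset] at hB'
      exact (Finset.mem_powersetCard.mp (hB' i)).1
    funext i
    have hπi : (arc0 i).image (fun x => emb i (π i x)) = B i := congrFun hπ i
    have h1 : ((arc0 i).image (π i)).image (emb i) = B i := by
      rw [Finset.image_image]; exact hπi
    have h2 : (arc0 i).image (π i) = dn i (B i) := hdnuniq i _ _ (hBW i) h1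
    show (arc0 i).image (fun x => emb i ((δ i) ((π i) x))) = B' i
    have h3 : (arc0 i).image (fun x => emb i ((δ i) ((π i) x)))
        = (((arc0 i).image (π i)).image (δ i)).image (emb i) := by
      rw [Finset.image_image, Finset.image_image]; rfl
    rw [h3, h2, hδ i, hup i _ (hB'W i)]
  have hfibconst : ∀ B ∈ 𝒞, ∀ B' ∈ 𝒞, (fib B).card = (fib B').card := by
    intro B hB B' hB'
    have hBk : ∀ i, (dn i (B i)).card = k i := by
      intro i
      rw [h𝒞, Fintype.mem_piFinset] at hB
      obtain ⟨h1, h2⟩ := Finset.mem_powersetCard.mp (hB i)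
      rw [hdncard i _ h1, h2]
    have hB'k : ∀ i, (dn i (B' i)).card = k i := by
      intro i
      rw [h𝒞, Fintype.mem_piFinset] at hB'
      obtain ⟨h1, h2⟩ := Finset.mem_powersetCard.mp (hB' i)
      rw [hdncard i _ h1, h2]
    have hδ : ∀ i, ∃ σ : Equiv.Perm (Fin ((W i).card)),
        (dn i (B i)).image σ = dn i (B' i) := by
      intro i
      exact exists_perm_image _ _ (by rw [hBk i, hB'k i])
    choose δ hδ' using hδ
    have hδinv : ∀ i, (dn i (B' i)).image (⇑((δ i)⁻¹)) = dn i (B i) := by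
      intro i
      rw [← hδ' i, Finset.image_image]
      have h : (⇑((δ i)⁻¹) ∘ ⇑(δ i)) = (id : Fin ((W i).card) → Fin ((W i).card)) := by
        funext x; simp
      rw [h, Finset.image_id]
    refine Finset.card_nbij' (fun π => fun i => δ i * π i)
      (fun π => fun i => (δ i)⁻¹ * π i) ?_ ?_ ?_ ?_
    · intro π hπ
      simp only [hfib, Finset.mem_coe, Finset.mem_filter] at hπ ⊢
      exact ⟨Finset.mem_univ _, step B B' hB hB' δ hδ' π hπ.2⟩
    · intro π hπ
      simp only [hfib, Finset.mem_coe, Finset.mem_filter] at hπ ⊢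
      exact ⟨Finset.mem_univ _, step B' B hB' hB (fun i => (δ i)⁻¹) hδinv π hπ.2⟩
    · intro π _
      funext i
      exact inv_mul_cancel_left _ _
    · intro π _
      funext i
      exact mul_inv_cancel_left _ _
  -- summation over fibers
  have hsum : ∀ F : (Fin m → Finset V) → ℝ,
      ∑ π : Ω, F (X π) = ∑ B ∈ 𝒞, ((fib B).card : ℝ) * F B := by
    intro F
    rw [← Finset.sum_fiberwise_of_maps_to' (fun π _ => hXmem π) F]
    apply Finset.sum_congr rfl
    intro B _
    rw [Finset.sum_const, nsmul_eq_mul]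
  have hone : (1 : Ω) ∈ Finset.univ := Finset.mem_univ _
  set N : ℕ := (fib (X 1)).card with hN
  have hsum' : ∀ F : (Fin m → Finset V) → ℝ,
      ∑ π : Ω, F (X π) = (N : ℝ) * ∑ B ∈ 𝒞, F B := by
    intro F
    rw [hsum F, Finset.mul_sum]
    apply Finset.sum_congr rfl
    intro B hB
    rw [hfibconst B hB (X 1) (hXmem 1)]
  have hΩcard : (Fintype.card Ω : ℝ) = (N : ℝ) * (𝒞.card : ℝ) := by
    have h := hsum' (fun _ => (1 : ℝ))
    simpa [Finset.sum_const, mul_comm] using h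
  have hΩpos : 0 < Fintype.card Ω := Fintype.card_pos_iff.mpr ⟨1⟩
  -- pointwise inequality
  set r1v : Ω := fun i => r1 i with hr1v
  set r2v : Ω := fun i => r2 i with hr2v
  set F : (Fin m → Finset V) → ℝ := fun B => g (A ∪ Finset.univ.biUnion fun i => B i)
    with hF
  have hpoint : ∀ π : Ω, g A ≤ F (X π) + F (X (π * r1v)) + F (X (π * r2v)) := by
    intro π
    set U0 := Finset.univ.biUnion (fun i => X π i) with hU0
    set U1 := Finset.univ.biUnion (fun i => X (π * r1v) i) with hU1
    set U2 := Finset.univ.biUnion (fun i => X (π * r2v) i) with hU2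
    have hYi : ∀ i, X π i ∩ X (π * r1v) i ∩ X (π * r2v) i = ∅ := by
      intro i
      have e1 : X (π * r1v) i = ((arc0 i).image (r1 i)).image (fun x => emb i (π i x)) := by
        rw [Finset.image_image]; rfl
      have e2 : X (π * r2v) i = ((arc0 i).image (r2 i)).image (fun x => emb i (π i x)) := by
        rw [Finset.image_image]; rfl
      rw [e1, e2]
      show ((arc0 i).image fun x => emb i (π i x)) ∩ _ ∩ _ = ∅
      rw [← Finset.image_inter _ _ (hXinj π i), ← Finset.image_inter _ _ (hXinj π i)]
      rw [harc i, Finset.image_empty]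
    have hUempty : U0 ∩ U1 ∩ U2 = ∅ := by
      rw [Finset.eq_empty_iff_forall_notMem]
      intro v hv
      have hv12 := Finset.mem_inter.mp hv
      have hv2 := hv12.2
      have hv0 := (Finset.mem_inter.mp hv12.1).1
      have hv1 := (Finset.mem_inter.mp hv12.1).2
      obtain ⟨i0, _, hvi0⟩ := Finset.mem_biUnion.mp hv0
      obtain ⟨i1, _, hvi1⟩ := Finset.mem_biUnion.mp hv1
      obtain ⟨i2, _, hvi2⟩ := Finset.mem_biUnion.mp hv2
      have hWsub : ∀ i, W i ⊆ Vg i := fun i => Finset.sdiff_subset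
      have heq1 : i1 = i0 := by
        by_contra hne
        exact Finset.disjoint_left.mp (hdisj i1 i0 hne)
          (hWsub i1 (hXW _ i1 hvi1)) (hWsub i0 (hXW _ i0 hvi0))
      have heq2 : i2 = i0 := by
        by_contra hne
        exact Finset.disjoint_left.mp (hdisj i2 i0 hne)
          (hWsub i2 (hXW _ i2 hvi2)) (hWsub i0 (hXW _ i0 hvi0))
      rw [heq1] at hvi1
      rw [heq2] at hvi2
      have : v ∈ X π i0 ∩ X (π * r1v) i0 ∩ X (π * r2v) i0 :=
        Finset.mem_inter.mpr ⟨Finset.mem_inter.mpr ⟨hvi0, hvi1⟩, hvi2⟩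
      rw [hYi i0] at this
      exact Finset.notMem_empty v this
    have s1 := submod_ui g hg_submod (A ∪ U0) (A ∪ U1)
    have hint1 : (A ∪ U0) ∩ (A ∪ U1) = A ∪ (U0 ∩ U1) :=
      (Finset.union_inter_distrib_left A U0 U1).symm
    have s2 := submod_ui g hg_submod (A ∪ (U0 ∩ U1)) (A ∪ U2)
    have hint2 : (A ∪ (U0 ∩ U1)) ∩ (A ∪ U2) = A := by
      rw [← Finset.union_inter_distrib_left, hUempty, Finset.union_empty]
    rw [hint1] at s1
    rw [hint2] at s2
    have n1 := hg_nonneg ((A ∪ U0) ∪ (A ∪ U1))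
    have n2 := hg_nonneg ((A ∪ (U0 ∩ U1)) ∪ (A ∪ U2))
    have hF0 : F (X π) = g (A ∪ U0) := rfl
    have hF1 : F (X (π * r1v)) = g (A ∪ U1) := rfl
    have hF2 : F (X (π * r2v)) = g (A ∪ U2) := rfl
    rw [hF0, hF1, hF2]
    linarith
  -- reindexing
  have hre : ∀ ρ : Ω, ∑ π : Ω, F (X (π * ρ)) = ∑ π : Ω, F (X π) :=
    fun ρ => Fintype.sum_bijective (· * ρ) (Group.mulRight_bijective ρ)
      (fun π => F (X (π * ρ))) (fun π => F (X π)) (fun π => rfl)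
  have hmain : (Fintype.card Ω : ℝ) * g A ≤ 3 * ∑ π : Ω, F (X π) := by
    have h1 : ∑ π : Ω, g A ≤ ∑ π : Ω, (F (X π) + F (X (π * r1v)) + F (X (π * r2v))) :=
      Finset.sum_le_sum (fun π _ => hpoint π)
    rw [Finset.sum_add_distrib, Finset.sum_add_distrib, hre r1v, hre r2v] at h1
    rw [Finset.sum_const, Finset.card_univ, nsmul_eq_mul] at h1
    linarith
  -- conclusion
  have hCpos : (0 : ℝ) < (𝒞.card : ℝ) := by
    by_contra h
    push_neg at h
    have hc0 : (𝒞.card : ℝ) = 0 := le_antisymm h (Nat.cast_nonneg _)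
    rw [hc0, mul_zero] at hΩcard
    have : (0 : ℝ) < (Fintype.card Ω : ℝ) := by exact_mod_cast hΩpos
    linarith
  have hNpos : (0 : ℝ) < (N : ℝ) := by
    by_contra h
    push_neg at h
    have hn0 : (N : ℝ) = 0 := le_antisymm h (Nat.cast_nonneg _)
    rw [hn0, zero_mul] at hΩcard
    have : (0 : ℝ) < (Fintype.card Ω : ℝ) := by exact_mod_cast hΩpos
    linarith
  rw [le_div_iff₀ hCpos]
  have hS := hsum' F
  rw [hS, hΩcard] at hmain
  have h2 : (N : ℝ) * ((𝒞.card : ℝ) * g A) ≤ (N : ℝ) * (3 * ∑ B ∈ 𝒞, F B) := by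
    have := hmain; nlinarith
  have h3 : (𝒞.card : ℝ) * g A ≤ 3 * ∑ B ∈ 𝒞, F B :=
    le_of_mul_le_mul_left h2 hNpos
  have : ∑ B ∈ 𝒞, F B = ∑ B ∈ 𝒞, g (A ∪ Finset.univ.biUnion fun i => B i) := rfl
  rw [this] at h3
  linarith
end
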